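/- arXiv:1304.6642 — 10 statements merged into one kernel-verified Lean document; each statement's English description precedes it below -/
import Mathlib

section
/- If Γ is a subdegree finite group of permutations of a countable set S, then with respect to the ultrametric δ, each ball of radius ρ < 1 has only finitely many distinct subballs of radius ρ' < ρ. -/
/-- The confluent of two permutations with respect to an exhausting sequence `A` of finite
subsets of `S`: the least index `i` such that `γ₁ γ₂⁻¹` moves some point of `A i`
(so `γ₁` and `γ₂` have confluent `≥ i` iff `γ₁ γ₂⁻¹` fixes `A (i-1)` pointwise). -/
noncomputable def conf {S : Type*} (A : ℕ → Finset S) (γ₁ γ₂ : Equiv.Perm S) : ℕ :=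
  sInf {i : ℕ | ∃ s ∈ A i, γ₁ (γ₂⁻¹ s) ≠ s}

/- The ultrametric distance: `0` if the permutations are equal, `2^{-conf}` otherwise. -/
open Classical in
noncomputable def pdist {S : Type*} (A : ℕ → Finset S) (γ₁ γ₂ : Equiv.Perm S) : ℝ :=
  if γ₁ = γ₂ then 0 else (1 / 2 : ℝ) ^ conf A γ₁ γ₂


/-- The ball of radius `ρ` around `γ` in `Γ`, with respect to the ultrametric `pdist`. -/
def ballIn {S : Type*} (Γ : Subgroup (Equiv.Perm S)) (A : ℕ → Finset S) (γ : Γ) (ρ : ℝ) :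
    Set Γ :=
  {γ' : Γ | pdist A (γ : Equiv.Perm S) (γ' : Equiv.Perm S) ≤ ρ}


/-- `Γ` is subdegree finite if every orbit of every point stabiliser is finite. -/
def SubdegreeFinite {S : Type*} (Γ : Subgroup (Equiv.Perm S)) : Prop :=
  ∀ s t : S, Set.Finite {u : S | ∃ γ ∈ Γ, γ s = s ∧ γ t = u}

section Aux

variable {S : Type*} {A : ℕ → Finset S}

private lemma exists_moved {γ₁ γ₂ : Equiv.Perm S} (h : γ₁ ≠ γ₂) :
    ∃ t : S, γ₁ (γ₂⁻¹ t) ≠ t := by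
  by_contra hc
  push_neg at hc
  exact h (Equiv.ext fun u => by have := hc (γ₂ u); simpa using this)

private lemma confSet_nonempty (hexh : ∀ s : S, ∃ i, s ∈ A i) {γ₁ γ₂ : Equiv.Perm S}
    (h : γ₁ ≠ γ₂) : {i : ℕ | ∃ s ∈ A i, γ₁ (γ₂⁻¹ s) ≠ s}.Nonempty := by
  obtain ⟨t, ht⟩ := exists_moved h
  obtain ⟨i, hi⟩ := hexh t
  exact ⟨i, t, hi, ht⟩

private lemma moved_symm (a b : Equiv.Perm S) (s : S) : a (b⁻¹ s) = s ↔ b (a⁻¹ s) = s := by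
  constructor <;> intro h
  · have h2 : b⁻¹ s = a⁻¹ s := by have := congrArg (⇑a⁻¹) h; simpa using this
    rw [← h2]; simp
  · have h2 : a⁻¹ s = b⁻¹ s := by have := congrArg (⇑b⁻¹) h; simpa using this
    rw [← h2]; simp

private lemma pdist_nonneg (A : ℕ → Finset S) (γ₁ γ₂ : Equiv.Perm S) :
    0 ≤ pdist A γ₁ γ₂ := by
  unfold pdist
  split
  · exact le_refl 0
  · positivity

private lemma pdist_self (A : ℕ → Finset S) (γ₁ : Equiv.Perm S) : pdist A γ₁ γ₁ = 0 := by
  simp [pdist]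

private lemma pdist_symm (A : ℕ → Finset S) (γ₁ γ₂ : Equiv.Perm S) :
    pdist A γ₁ γ₂ = pdist A γ₂ γ₁ := by
  have hc : conf A γ₁ γ₂ = conf A γ₂ γ₁ := by
    unfold conf
    congr 1
    ext i
    constructor <;> rintro ⟨s, hs, h⟩ <;>
      exact ⟨s, hs, fun hh => h ((moved_symm _ _ s).mp hh)⟩
  unfold pdist
  by_cases h : γ₁ = γ₂
  · simp [h]
  · rw [if_neg h, if_neg (Ne.symm h), hc]

private lemma pdist_le_of_agree (hmono : Monotone A) (hexh : ∀ s : S, ∃ i, s ∈ A i)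
    {γ₁ γ₂ : Equiv.Perm S} (n : ℕ) (h : ∀ s ∈ A n, γ₁ (γ₂⁻¹ s) = s) :
    pdist A γ₁ γ₂ ≤ (1 / 2 : ℝ) ^ n := by
  unfold pdist
  split
  · positivity
  · rename_i hne
    have hle : n ≤ conf A γ₁ γ₂ := by
      refine le_csInf (confSet_nonempty hexh hne) ?_
      rintro k ⟨s, hs, hmov⟩
      by_contra hk
      push_neg at hk
      exact hmov (h s (hmono hk.le hs))
    exact pow_le_pow_of_le_one (by norm_num) (by norm_num) hle

private lemma agree_of_pdist_lt {γ₁ γ₂ : Equiv.Perm S} {n : ℕ}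
    (h : pdist A γ₁ γ₂ < (1 / 2 : ℝ) ^ n) : ∀ s ∈ A n, γ₁ (γ₂⁻¹ s) = s := by
  intro s hs
  by_cases hne : γ₁ = γ₂
  · subst hne; simp
  · unfold pdist at h
    rw [if_neg hne] at h
    have hgt : n < conf A γ₁ γ₂ := by
      by_contra hk
      push_neg at hk
      exact absurd (pow_le_pow_of_le_one (by norm_num) (by norm_num) hk) (not_le.mpr h)
    have := Nat.notMem_of_lt_sInf hgt
    by_contra hmov
    exact this ⟨s, hs, hmov⟩

private lemma pdist_triangle (hexh : ∀ s : S, ∃ i, s ∈ A i) (γ₁ γ₂ γ₃ : Equiv.Perm S) :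
    pdist A γ₁ γ₃ ≤ max (pdist A γ₁ γ₂) (pdist A γ₂ γ₃) := by
  by_cases h13 : γ₁ = γ₃
  · subst h13
    rw [pdist_self]
    exact le_max_of_le_left (pdist_nonneg A γ₁ γ₂)
  by_cases h12 : γ₁ = γ₂
  · subst h12; exact le_max_right _ _
  by_cases h23 : γ₂ = γ₃
  · subst h23; exact le_max_left _ _
  have hmin : min (conf A γ₁ γ₂) (conf A γ₂ γ₃) ≤ conf A γ₁ γ₃ := by
    refine le_csInf (confSet_nonempty hexh h13) ?_
    rintro k ⟨s, hs, hmov⟩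
    have hor : (∃ s ∈ A k, γ₁ (γ₂⁻¹ s) ≠ s) ∨ (∃ s ∈ A k, γ₂ (γ₃⁻¹ s) ≠ s) := by
      by_contra hc
      push_neg at hc
      obtain ⟨hc1, hc2⟩ := hc
      have e1 : γ₂⁻¹ s = γ₁⁻¹ s := by
        have := congrArg (⇑γ₁⁻¹) (hc1 s hs); simpa using this
      have e2 : γ₃⁻¹ s = γ₂⁻¹ s := by
        have := congrArg (⇑γ₂⁻¹) (hc2 s hs); simpa using this
      exact hmov (by rw [e2, e1]; simp)
    rcases hor with h | h
    · exact le_trans (min_le_left _ _) (Nat.sInf_le h)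
    · exact le_trans (min_le_right _ _) (Nat.sInf_le h)
  unfold pdist
  rw [if_neg h13, if_neg h12, if_neg h23]
  rcases le_total (conf A γ₁ γ₂) (conf A γ₂ γ₃) with hc | hc
  · refine le_max_of_le_left ?_
    exact pow_le_pow_of_le_one (by norm_num) (by norm_num) (by omega)
  · refine le_max_of_le_right ?_
    exact pow_le_pow_of_le_one (by norm_num) (by norm_num) (by omega)

private lemma ballIn_eq_of {Γ : Subgroup (Equiv.Perm S)} (hexh : ∀ s : S, ∃ i, s ∈ A i)
    {γ₁ γ₂ : Γ} {ρ' : ℝ}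
    (h : pdist A (γ₁ : Equiv.Perm S) (γ₂ : Equiv.Perm S) ≤ ρ') :
    ballIn Γ A γ₁ ρ' = ballIn Γ A γ₂ ρ' := by
  ext x
  simp only [ballIn, Set.mem_setOf_eq]
  constructor
  · intro hx
    calc pdist A (γ₂ : Equiv.Perm S) (x : Equiv.Perm S)
        ≤ max (pdist A (γ₂ : Equiv.Perm S) (γ₁ : Equiv.Perm S))
            (pdist A (γ₁ : Equiv.Perm S) (x : Equiv.Perm S)) := pdist_triangle hexh _ _ _
      _ ≤ ρ' := max_le (by rw [← pdist_symm]; exact h) hx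
  · intro hx
    calc pdist A (γ₁ : Equiv.Perm S) (x : Equiv.Perm S)
        ≤ max (pdist A (γ₁ : Equiv.Perm S) (γ₂ : Equiv.Perm S))
            (pdist A (γ₂ : Equiv.Perm S) (x : Equiv.Perm S)) := pdist_triangle hexh _ _ _
      _ ≤ ρ' := max_le h hx

end Aux

/-- If `Γ` is subdegree finite, then every ball of radius `ρ < 1` has only finitely many
distinct subballs of radius `ρ' < ρ`. -/
theorem finitely_many_subballs {S : Type*} [Countable S] (Γ : Subgroup (Equiv.Perm S))
    (hsd : SubdegreeFinite Γ) (A : ℕ → Finset S) (hmono : Monotone A)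
    (hexh : ∀ s : S, ∃ i, s ∈ A i) (h0 : (A 0).Nonempty)
    (ρ ρ' : ℝ) (hρ'0 : 0 < ρ') (hρ' : ρ' < ρ) (hρ1 : ρ < 1) (γ : Γ) :
    Set.Finite {B : Set Γ | ∃ γ' : Γ, γ' ∈ ballIn Γ A γ ρ ∧ B = ballIn Γ A γ' ρ'} := by
  classical
  obtain ⟨n, hn⟩ := exists_pow_lt_of_lt_one hρ'0 (by norm_num : (1 / 2 : ℝ) < 1)
  obtain ⟨s₀, hs₀⟩ := h0
  set p : S := (γ : Equiv.Perm S)⁻¹ s₀ with hp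
  set r : Γ → (↥(A n) → S) :=
    fun γ' s => ((γ' : Equiv.Perm S))⁻¹ (s : S) with hr
  set T : Set (Set Γ) :=
    {B : Set Γ | ∃ γ' : Γ, γ' ∈ ballIn Γ A γ ρ ∧ B = ballIn Γ A γ' ρ'} with hT
  set R : Set (↥(A n) → S) := r '' (ballIn Γ A γ ρ) with hR
  -- every member of a ball of radius ρ around γ has inverse agreeing with γ⁻¹ on A 0
  have hagree0 : ∀ γ' : Γ, γ' ∈ ballIn Γ A γ ρ →
      ∀ s ∈ A 0, (γ : Equiv.Perm S) (((γ' : Equiv.Perm S))⁻¹ s) = s := by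
    intro γ' hγ'
    exact agree_of_pdist_lt (lt_of_le_of_lt hγ' (by simpa using hρ1))
  -- R is finite
  have hRfin : R.Finite := by
    have hsub : R ⊆ Set.pi Set.univ (fun s : ↥(A n) =>
        {u : S | ∃ β ∈ Γ, β p = p ∧ β ((γ : Equiv.Perm S)⁻¹ (s : S)) = u}) := by
      rintro f ⟨γ', hγ', rfl⟩ s -
      set β : Equiv.Perm S := ((γ' : Equiv.Perm S))⁻¹ * (γ : Equiv.Perm S) with hβ
      refine ⟨β, ?_, ?_, ?_⟩
      · exact Γ.mul_mem (Γ.inv_mem γ'.2) γ.2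
      · have h1 : (γ : Equiv.Perm S) (((γ' : Equiv.Perm S))⁻¹ s₀) = s₀ :=
          hagree0 γ' hγ' s₀ hs₀
        have h2 : ((γ' : Equiv.Perm S))⁻¹ s₀ = (γ : Equiv.Perm S)⁻¹ s₀ := by
          have := congrArg (⇑(γ : Equiv.Perm S)⁻¹) h1; simpa using this
        simp [hβ, hp, Equiv.Perm.mul_apply, h2]
      · simp [hβ, hr, Equiv.Perm.mul_apply]
    refine Set.Finite.subset (Set.Finite.pi (fun s : ↥(A n) => hsd p ((γ : Equiv.Perm S)⁻¹ (s : S)))) hsub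
  -- the map sending a ball to the set of restrictions of inverses of its members
  set ψ : Set Γ → Set (↥(A n) → S) := fun B => r '' B with hψ
  -- centers of subballs are in the big ball, hence ψ B ⊆ R for B ∈ T
  have hsubball : ∀ γ' : Γ, γ' ∈ ballIn Γ A γ ρ → ballIn Γ A γ' ρ' ⊆ ballIn Γ A γ ρ := by
    intro γ' hγ' x hx
    calc pdist A (γ : Equiv.Perm S) (x : Equiv.Perm S)
        ≤ max (pdist A (γ : Equiv.Perm S) (γ' : Equiv.Perm S))
            (pdist A (γ' : Equiv.Perm S) (x : Equiv.Perm S)) := pdist_triangle hexh _ _ _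
      _ ≤ ρ := max_le hγ' (le_of_lt (lt_of_le_of_lt hx hρ'))
  have hself : ∀ γ' : Γ, γ' ∈ ballIn Γ A γ' ρ' := by
    intro γ'
    show pdist A _ _ ≤ ρ'
    rw [pdist_self]
    exact le_of_lt hρ'0
  -- ψ is injective on T
  have hinj : Set.InjOn ψ T := by
    rintro B₁ ⟨γ₁, hγ₁, rfl⟩ B₂ ⟨γ₂, hγ₂, rfl⟩ hψeq
    have hmem : r γ₁ ∈ ψ (ballIn Γ A γ₂ ρ') := by
      rw [← hψeq]; exact ⟨γ₁, hself γ₁, rfl⟩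
    obtain ⟨β, hβ, hrβ⟩ := hmem
    have hβγ₁ : pdist A (β : Equiv.Perm S) (γ₁ : Equiv.Perm S) ≤ ρ' := by
      refine le_of_lt (lt_of_le_of_lt (pdist_le_of_agree hmono hexh n ?_) hn)
      intro s hs
      have h1 : ((β : Equiv.Perm S))⁻¹ s = ((γ₁ : Equiv.Perm S))⁻¹ s :=
        congrFun hrβ ⟨s, hs⟩
      rw [← h1]; simp
    have h21 : pdist A (γ₂ : Equiv.Perm S) (γ₁ : Equiv.Perm S) ≤ ρ' :=
      le_trans (pdist_triangle hexh _ (β : Equiv.Perm S) _) (max_le hβ hβγ₁)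
    have h12 : pdist A (γ₁ : Equiv.Perm S) (γ₂ : Equiv.Perm S) ≤ ρ' := by
      rw [pdist_symm]; exact h21
    exact ballIn_eq_of hexh h12
  -- ψ '' T is finite
  have himfin : (ψ '' T).Finite := by
    refine Set.Finite.subset hRfin.finite_subsets ?_
    rintro U ⟨B, ⟨γ', hγ', rfl⟩, rfl⟩
    rintro f ⟨x, hx, rfl⟩
    exact ⟨x, hsubball γ' hγ' hx, rfl⟩
  exact Set.Finite.of_finite_image himfin hinj
end

section
/- If Γ is a closed, subdegree finite group of permutations of a countable set S, then Γ is locally compact in the permutation topology; more specifically, every ball of radius ρ < 1 with respect to the ultrametric δ is compact. -/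
/-- The permutation topology on `Equiv.Perm S`: the topology of pointwise convergence,
where `S` carries the discrete topology. -/
noncomputable def permTop (S : Type*) : TopologicalSpace (Equiv.Perm S) :=
  letI : TopologicalSpace S := ⊥
  TopologicalSpace.induced (fun g => (g : S → S)) Pi.topologicalSpace

/-- The permutation topology on a subgroup `Γ` of `Equiv.Perm S` (subspace topology). -/
noncomputable def grpTop {S : Type*} (Γ : Subgroup (Equiv.Perm S)) :
    TopologicalSpace Γ :=
  (permTop S).induced (fun γ => (γ : Equiv.Perm S))

/-!
Pointwise convergence on the discrete set `S` makes `Perm S` a subspace of `S → S`. For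
`g₀ ∈ Γ` with `g₀ x = y`, the members of `{g ∈ Γ | g x = y}` are the `g₀ ζ` with `ζ` in the
stabiliser of `x`, so subdegree finiteness bounds the images and the preimages of every point
under them to finite sets. By Tychonoff this closed set is then compact: finiteness of the
images puts it inside a compact product, finiteness of the preimages keeps pointwise limits
surjective. A ball of radius `ρ < 1` about `γ` consists of the `γ'` such that `γ' γ⁻¹` fixes
`A m` pointwise whenever `ρ < 2⁻ᵐ`; it is closed, and (taking `m = 0`) contained in one of
these compact sets.
-/

open Topology Equiv

attribute [local instance] permTop

section PermTopology

variable {S : Type*}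

theorem isEmbedding_coeFn_perm [TopologicalSpace S] [DiscreteTopology S] :
    IsEmbedding (fun g : Perm S => (g : S → S)) := by
  refine ⟨⟨?_⟩, DFunLike.coe_injective⟩
  rw [DiscreteTopology.eq_bot (α := S)]
  rfl

instance t2Space_perm : T2Space (Perm S) := by
  let : TopologicalSpace S := ⊥
  have : DiscreteTopology S := ⟨rfl⟩
  exact isEmbedding_coeFn_perm.t2Space

theorem isClopen_setOf_perm_apply_eq (x y : S) : IsClopen {g : Perm S | g x = y} := by
  let : TopologicalSpace S := ⊥
  have : DiscreteTopology S := ⟨rfl⟩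
  exact (isClopen_discrete {y}).preimage
    ((continuous_apply x).comp isEmbedding_coeFn_perm.continuous)

theorem exists_mem_forall_eq_of_mem_closure {X Y : Type*} [TopologicalSpace Y]
    [DiscreteTopology Y] {K : Set (X → Y)} {f : X → Y} (hf : f ∈ closure K) (F : Finset X) :
    ∃ g ∈ K, ∀ x ∈ F, g x = f x := by
  obtain ⟨g, hgF, hgK⟩ := mem_closure_iff.mp hf (Set.pi F fun x => {f x})
    (isOpen_set_pi F.finite_toSet fun _ _ => isOpen_discrete _) fun _ _ => rfl
  exact ⟨g, hgK, hgF⟩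

theorem isCompact_of_isClosed_of_finite_orbits {K : Set (Perm S)} (hK : IsClosed K)
    (hfin : ∀ t, ((fun g : Perm S => g t) '' K).Finite)
    (hfin_inv : ∀ t, ((fun g : Perm S => g⁻¹ t) '' K).Finite) : IsCompact K := by
  classical
  let : TopologicalSpace S := ⊥
  have : DiscreteTopology S := ⟨rfl⟩
  have hemb := isEmbedding_coeFn_perm (S := S)
  rw [hemb.isCompact_iff]
  refine (isCompact_univ_pi fun t => (hfin t).isCompact).of_isClosed_subset
    (isClosed_of_closure_subset fun f hf => ?_) ?_
  · have hinj : Function.Injective f := by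
      intro x y hxy
      obtain ⟨_, ⟨g, -, rfl⟩, hg⟩ := exists_mem_forall_eq_of_mem_closure hf {x, y}
      exact g.injective (by simp_all)
    have hsurj : Function.Surjective f := by
      intro t
      obtain ⟨_, ⟨g, hg, rfl⟩, hgf⟩ :=
        exists_mem_forall_eq_of_mem_closure hf (hfin_inv t).toFinset
      exact ⟨g⁻¹ t, by simpa using (hgf (g⁻¹ t) (by simpa using ⟨g, hg, rfl⟩)).symm⟩
    have hσ : Equiv.ofBijective f ⟨hinj, hsurj⟩ ∈ closure K := by
      rw [hemb.closure_eq_preimage_closure_image]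
      exact hf
    exact ⟨_, hK.closure_subset hσ, rfl⟩
  · rintro _ ⟨g, hg, rfl⟩ t -
    exact ⟨g, hg, rfl⟩

end PermTopology

theorem SubdegreeFinite.isCompact_setOf_apply_eq {S : Type*} {Γ : Subgroup (Perm S)}
    (hsd : SubdegreeFinite Γ) (hclosed : IsClosed (Γ : Set (Perm S))) (x y : S) :
    IsCompact ({g : Perm S | g x = y} ∩ Γ) := by
  rcases Set.eq_empty_or_nonempty ({g : Perm S | g x = y} ∩ Γ) with
    hK | ⟨g₀, (hg₀ : g₀ x = y), hg₀Γ⟩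
  · exact hK ▸ isCompact_empty
  refine isCompact_of_isClosed_of_finite_orbits
    ((isClopen_setOf_perm_apply_eq x y).isClosed.inter hclosed) (fun t => ?_) (fun t => ?_)
  · refine ((hsd x t).image g₀).subset ?_
    rintro _ ⟨g, ⟨(hg : g x = y), hgΓ⟩, rfl⟩
    refine ⟨(g₀⁻¹ * g) t, ⟨g₀⁻¹ * g, mul_mem (inv_mem hg₀Γ) hgΓ, ?_, rfl⟩, by simp⟩
    simp [hg, ← hg₀]
  · refine (hsd x (g₀⁻¹ t)).subset ?_
    rintro _ ⟨g, ⟨(hg : g x = y), hgΓ⟩, rfl⟩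
    refine ⟨g⁻¹ * g₀, mul_mem (inv_mem hgΓ) hg₀Γ, ?_, by simp⟩
    simp [hg₀, ← hg]

section Ultrametric

variable {S : Type*} {A : ℕ → Finset S}

theorem apply_inv_apply_eq_comm (g h : Perm S) (s : S) : g (h⁻¹ s) = s ↔ h (g⁻¹ s) = s := by
  rw [← Perm.eq_inv_iff_eq, eq_comm, Perm.eq_inv_iff_eq]

theorem pdist_nonneg_s3 (g h : Perm S) : 0 ≤ pdist A g h := by
  unfold pdist
  split_ifs <;> positivity

theorem lt_conf_iff (hmono : Monotone A) (hexh : ∀ s : S, ∃ i, s ∈ A i) {g h : Perm S}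
    (hne : g ≠ h) (m : ℕ) : m < conf A g h ↔ ∀ s ∈ A m, g (h⁻¹ s) = s := by
  have hmoved : {i : ℕ | ∃ s ∈ A i, g (h⁻¹ s) ≠ s}.Nonempty := by
    obtain ⟨x, hx⟩ : ∃ x, g x ≠ h x := by
      by_contra! hgh
      exact hne (Equiv.ext hgh)
    obtain ⟨i, hi⟩ := hexh (h x)
    exact ⟨i, h x, hi, by simpa using hx⟩
  constructor
  · intro hm s hs
    by_contra hmove
    exact (Nat.sInf_le ⟨s, hs, hmove⟩ : conf A g h ≤ m).not_gt hm
  · intro hfix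
    by_contra! hle
    obtain ⟨s, hs, hmove⟩ := Nat.sInf_mem hmoved
    exact hmove (hfix s (hmono hle hs))

theorem pdist_le_iff (hmono : Monotone A) (hexh : ∀ s : S, ∃ i, s ∈ A i) {ρ : ℝ} (hρ : 0 ≤ ρ)
    (g h : Perm S) :
    pdist A g h ≤ ρ ↔ ∀ m : ℕ, ρ < (1 / 2 : ℝ) ^ m → ∀ s ∈ A m, h (g⁻¹ s) = s := by
  by_cases hgh : g = h
  · simp [pdist, hgh, hρ]
  simp_rw [apply_inv_apply_eq_comm h g, ← lt_conf_iff hmono hexh hgh, pdist, if_neg hgh]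
  constructor
  · intro hle m hm
    exact (pow_lt_pow_iff_right_of_lt_one₀ (by norm_num) (by norm_num)).1 (hle.trans_lt hm)
  · intro hlt
    by_contra! hgt
    exact (hlt _ hgt).false

theorem isClosed_setOf_pdist_le (hmono : Monotone A) (hexh : ∀ s : S, ∃ i, s ∈ A i)
    (g : Perm S) (ρ : ℝ) : IsClosed {h : Perm S | pdist A g h ≤ ρ} := by
  rcases lt_or_ge ρ 0 with hρ | hρ
  · convert isClosed_empty
    exact Set.eq_empty_of_forall_notMem fun h hh => hρ.not_ge ((pdist_nonneg_s3 g h).trans hh)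
  simp_rw [pdist_le_iff hmono hexh hρ, Set.ofPred_forall]
  exact isClosed_iInter fun m => isClosed_iInter fun _ => isClosed_biInter fun s _ =>
    (isClopen_setOf_perm_apply_eq _ _).isClosed

end Ultrametric

theorem isCompact_ballIn {S : Type*} {Γ : Subgroup (Perm S)}
    (hclosed : IsClosed (Γ : Set (Perm S))) (hsd : SubdegreeFinite Γ) {A : ℕ → Finset S}
    (hmono : Monotone A) (hexh : ∀ s : S, ∃ i, s ∈ A i) (h0 : (A 0).Nonempty) (γ : Γ)
    {ρ : ℝ} (hρ : ρ < 1) : IsCompact (ballIn Γ A γ ρ) := by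
  obtain ⟨a, ha⟩ := h0
  have hball : ballIn Γ A γ ρ = (↑) ⁻¹' {g : Perm S | pdist A γ g ≤ ρ} := rfl
  rw [Subtype.isCompact_iff, hball, Set.image_preimage_eq_inter_range, Subtype.range_coe_subtype]
  refine (hsd.isCompact_setOf_apply_eq hclosed ((γ : Perm S)⁻¹ a) a).of_isClosed_subset
    ((isClosed_setOf_pdist_le hmono hexh _ ρ).inter hclosed) ?_
  rintro g ⟨hg, hgΓ⟩
  have hρ₀ : 0 ≤ ρ := (pdist_nonneg_s3 _ _).trans hg
  exact ⟨(pdist_le_iff hmono hexh hρ₀ _ _).1 hg 0 (by simpa using hρ) a ha, hgΓ⟩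

theorem SubdegreeFinite.locallyCompactSpace {S : Type*} [Nonempty S] {Γ : Subgroup (Perm S)}
    (hsd : SubdegreeFinite Γ) (hclosed : IsClosed (Γ : Set (Perm S))) :
    LocallyCompactSpace Γ := by
  obtain ⟨x⟩ := ‹Nonempty S›
  have : WeaklyLocallyCompactSpace Γ :=
    ⟨fun γ => ⟨(↑) ⁻¹' {g : Perm S | g x = (γ : Perm S) x}, ?_, ?_⟩⟩
  · infer_instance
  · rw [Subtype.isCompact_iff, Set.image_preimage_eq_inter_range, Subtype.range_coe_subtype]
    exact hsd.isCompact_setOf_apply_eq hclosed x ((γ : Perm S) x)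
  · exact ((isClopen_setOf_perm_apply_eq x _).isOpen.preimage continuous_subtype_val).mem_nhds rfl

theorem locally_compact_and_balls_compact_general {S : Type*}
    (Γ : Subgroup (Equiv.Perm S))
    (hclosed : @IsClosed (Equiv.Perm S) (permTop S) (Γ : Set (Equiv.Perm S)))
    (hsd : SubdegreeFinite Γ) (A : ℕ → Finset S) (hmono : Monotone A)
    (hexh : ∀ s : S, ∃ i, s ∈ A i) (h0 : (A 0).Nonempty) :
    @LocallyCompactSpace Γ (grpTop Γ) ∧
      ∀ ρ : ℝ, ρ < 1 → ∀ γ : Γ, @IsCompact Γ (grpTop Γ) (ballIn Γ A γ ρ) := by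
  have : Nonempty S := ⟨h0.choose⟩
  exact ⟨hsd.locallyCompactSpace hclosed,
    fun ρ hρ γ => isCompact_ballIn hclosed hsd hmono hexh h0 γ hρ⟩

/-- If `Γ` is a closed, subdegree finite group of permutations of a countable set, then `Γ`
is locally compact in the permutation topology; more specifically, every ball of radius
`ρ < 1` with respect to the ultrametric `pdist` is compact. -/
theorem locally_compact_and_balls_compact {S : Type*} [Countable S]
    (Γ : Subgroup (Equiv.Perm S))
    (hclosed : @IsClosed (Equiv.Perm S) (permTop S) (Γ : Set (Equiv.Perm S)))
    (hsd : SubdegreeFinite Γ) (A : ℕ → Finset S) (hmono : Monotone A)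
    (hexh : ∀ s : S, ∃ i, s ∈ A i) (h0 : (A 0).Nonempty) :
    @LocallyCompactSpace Γ (grpTop Γ) ∧
      ∀ ρ : ℝ, ρ < 1 → ∀ γ : Γ, @IsCompact Γ (grpTop Γ) (ballIn Γ A γ ρ) :=
  locally_compact_and_balls_compact_general Γ hclosed hsd A hmono hexh h0
end

section
/- Let Γ be a closed, subdegree finite group of permutations of a countable set S. Then the following are equivalent: (1) Γ is compact; (2) Γ stabilises some finite subset of S setwise; (3) some point of S has finite orbit under Γ; (4) every point of S has finite orbit under Γ. -/
/-!
All orbits are finite as soon as one is, since the orbit of `t` is covered by translates of the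
`Γ_s`-orbit of `t`, one for each point of the orbit of `s`. If all orbits are finite, `Γ` lies in
the compact product `∏ₛ Γ • s` of its orbits inside `S → S`, and it is closed there: a pointwise
limit of elements of `Γ` is injective, and it is surjective because on the finite orbit of `v` it
agrees with some `γ ∈ Γ`, which maps `γ⁻¹ v` to `v`; so it is a permutation, hence in `Γ`.
Conversely, orbits of a compact group acting continuously on a discrete set are finite.
-/

open Set Function Topology MulAction Equiv

theorem MulAction.finite_orbit_of_finite_orbit_stabilizer {G α : Type*} [Group G] [MulAction G α]
    {s t : α} (hs : (orbit G s).Finite) (ht : (orbit (stabilizer G s) t).Finite) :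
    (orbit G t).Finite := by
  choose γ hγ using fun u : orbit G s => mem_orbit_iff.mp u.2
  have := hs.to_subtype
  have := ht.to_subtype
  refine (finite_range fun p : orbit G s × orbit (stabilizer G s) t => γ p.1 • (p.2 : α)).subset ?_
  rintro _ ⟨g, rfl⟩
  let u : orbit G s := ⟨g • s, mem_orbit s g⟩
  have hstab : (γ u)⁻¹ * g ∈ stabilizer G s := by
    rw [mem_stabilizer_iff, mul_smul, inv_smul_eq_iff, hγ u]
  refine ⟨(u, ⟨((γ u)⁻¹ * g) • t, mem_orbit t (⟨_, hstab⟩ : stabilizer G s)⟩), ?_⟩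
  simp [mul_smul]

section PermutationGroup

variable {S : Type*}

theorem setOf_exists_mem_apply_eq_eq_orbit (Γ : Subgroup (Perm S)) (s : S) :
    {t : S | ∃ γ ∈ Γ, γ s = t} = orbit Γ s := by
  ext t
  simp [mem_orbit_iff, Perm.smul_def]

theorem SubdegreeFinite.finite_orbit_stabilizer {Γ : Subgroup (Perm S)} (hsd : SubdegreeFinite Γ)
    (s t : S) : (orbit (stabilizer Γ s) t).Finite := by
  convert hsd s t using 1
  ext u
  simp [mem_orbit_iff, Perm.smul_def, and_left_comm]

end PermutationGroup

section PiDiscrete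

variable {α β : Type*} [TopologicalSpace β] [DiscreteTopology β]

theorem exists_eqOn_of_mem_closure {A : Set (α → β)} {f : α → β} (hf : f ∈ closure A)
    {F : Set α} (hF : F.Finite) : ∃ g ∈ A, EqOn g f F := by
  obtain ⟨g, hgf, hg⟩ := mem_closure_iff.mp hf (F.pi fun x => {f x})
    (isOpen_set_pi hF fun _ _ => isOpen_discrete _) fun _ _ => rfl
  exact ⟨g, hg, hgf⟩

theorem injective_of_mem_closure {A : Set (α → β)} (hA : ∀ g ∈ A, Injective g) {f : α → β}
    (hf : f ∈ closure A) : Injective f := by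
  intro a b hab
  obtain ⟨g, hg, hgf⟩ := exists_eqOn_of_mem_closure hf (toFinite {a, b})
  exact hA g hg (by rw [hgf (by simp), hgf (by simp), hab])

end PiDiscrete

section PermutationTopology

variable {S : Type*} [TopologicalSpace S] [DiscreteTopology S]

theorem permTop_eq_induced :
    permTop S = .induced (fun g : Perm S => (g : S → S)) Pi.topologicalSpace := by
  obtain rfl := DiscreteTopology.eq_bot (α := S)
  rfl

theorem grpTop_eq_induced (Γ : Subgroup (Perm S)) :
    grpTop Γ = .induced (fun γ : Γ => ((γ : Perm S) : S → S)) Pi.topologicalSpace := by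
  rw [grpTop, permTop_eq_induced, induced_compose]
  rfl

variable {Γ : Subgroup (Perm S)}

theorem surjective_of_mem_closure_image_coe (hfin : ∀ s : S, (orbit Γ s).Finite) {f : S → S}
    (hf : f ∈ closure ((⇑) '' (Γ : Set (Perm S)))) : Surjective f := by
  intro v
  obtain ⟨_, ⟨g, hg, rfl⟩, hgf⟩ := exists_eqOn_of_mem_closure hf (hfin v)
  refine ⟨g⁻¹ v, ?_⟩
  have hv : g⁻¹ v ∈ orbit Γ v := mem_orbit v (⟨g⁻¹, inv_mem hg⟩ : Γ)
  rw [← hgf hv]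
  simp

theorem isClosed_image_coe_of_finite_orbits
    (hclosed : @IsClosed (Perm S) (permTop S) (Γ : Set (Perm S)))
    (hfin : ∀ s : S, (orbit Γ s).Finite) : IsClosed ((⇑) '' (Γ : Set (Perm S)) : Set (S → S)) := by
  refine closure_subset_iff_isClosed.mp fun f hf => ?_
  have hbij : Bijective f :=
    ⟨injective_of_mem_closure (by rintro _ ⟨g, -, rfl⟩; exact g.injective) hf,
      surjective_of_mem_closure_image_coe hfin hf⟩
  rw [permTop_eq_induced, isClosed_induced_iff'] at hclosed
  exact ⟨Equiv.ofBijective f hbij, hclosed _ hf, rfl⟩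

theorem compactSpace_grpTop_of_finite_orbits
    (hclosed : @IsClosed (Perm S) (permTop S) (Γ : Set (Perm S)))
    (hfin : ∀ s : S, (orbit Γ s).Finite) : @CompactSpace Γ (grpTop Γ) := by
  let := grpTop Γ
  have hind : IsInducing fun γ : Γ => ((γ : Perm S) : S → S) := ⟨grpTop_eq_induced Γ⟩
  rw [← isCompact_univ_iff, hind.isCompact_iff, image_univ, range_comp', Subtype.range_coe]
  refine (isCompact_univ_pi fun s => (hfin s).isCompact).of_isClosed_subset
    (isClosed_image_coe_of_finite_orbits hclosed hfin) ?_
  rintro _ ⟨g, hg, rfl⟩ s -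
  exact mem_orbit s (⟨g, hg⟩ : Γ)

theorem finite_orbit_of_compactSpace_grpTop [@CompactSpace Γ (grpTop Γ)] (s : S) :
    (orbit Γ s).Finite := by
  let := grpTop Γ
  have hcoe : Continuous fun γ : Γ => ((γ : Perm S) : S → S) :=
    continuous_iff_le_induced.mpr (grpTop_eq_induced Γ).le
  exact (isCompact_range ((continuous_apply s).comp hcoe)).finite_of_discrete

theorem compactSpace_grpTop_iff_finite_orbits
    (hclosed : @IsClosed (Perm S) (permTop S) (Γ : Set (Perm S))) :
    @CompactSpace Γ (grpTop Γ) ↔ ∀ s : S, (orbit Γ s).Finite :=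
  ⟨fun _ => finite_orbit_of_compactSpace_grpTop, compactSpace_grpTop_of_finite_orbits hclosed⟩

end PermutationTopology

theorem compact_iff_finite_orbits_general {S : Type*} [Nonempty S]
    (Γ : Subgroup (Equiv.Perm S))
    (hclosed : @IsClosed (Equiv.Perm S) (permTop S) (Γ : Set (Equiv.Perm S)))
    (hsd : SubdegreeFinite Γ) :
    List.TFAE
      [@CompactSpace Γ (grpTop Γ),
       ∃ S' : Finset S, S'.Nonempty ∧ ∀ γ ∈ Γ, ∀ s ∈ S', γ s ∈ S',
       ∃ s : S, Set.Finite {t : S | ∃ γ ∈ Γ, γ s = t},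
       ∀ s : S, Set.Finite {t : S | ∃ γ ∈ Γ, γ s = t}] := by
  let : TopologicalSpace S := ⊥
  have : DiscreteTopology S := ⟨rfl⟩
  simp only [setOf_exists_mem_apply_eq_eq_orbit]
  tfae_have 1 ↔ 4 := compactSpace_grpTop_iff_finite_orbits hclosed
  tfae_have 4 → 3 := fun h => ⟨Classical.arbitrary S, h _⟩
  tfae_have 3 → 4 := fun ⟨s, hs⟩ t =>
    finite_orbit_of_finite_orbit_stabilizer hs (hsd.finite_orbit_stabilizer s t)
  tfae_have 3 → 2 := fun ⟨s, hs⟩ =>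
    ⟨hs.toFinset, ⟨s, hs.mem_toFinset.mpr (mem_orbit_self s)⟩, fun γ hγ t ht =>
      hs.mem_toFinset.mpr (mem_orbit_of_mem_orbit ⟨γ, hγ⟩ (hs.mem_toFinset.mp ht))⟩
  tfae_have 2 → 3 := fun ⟨S', ⟨s, hs⟩, hinv⟩ =>
    ⟨s, S'.finite_toSet.subset (by rintro _ ⟨γ, rfl⟩; exact hinv γ γ.2 s hs)⟩
  tfae_finish

/-- For a closed, subdegree finite group `Γ` of permutations of a countable (nonempty) set
`S`, the following are equivalent: (1) `Γ` is compact (in the permutation topology);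
(2) `Γ` stabilises some nonempty finite subset of `S` setwise; (3) some point of `S` has
finite orbit under `Γ`; (4) every point of `S` has finite orbit under `Γ`. -/
theorem compact_iff_finite_orbits {S : Type*} [Countable S] [Nonempty S]
    (Γ : Subgroup (Equiv.Perm S))
    (hclosed : @IsClosed (Equiv.Perm S) (permTop S) (Γ : Set (Equiv.Perm S)))
    (hsd : SubdegreeFinite Γ) :
    List.TFAE
      [@CompactSpace Γ (grpTop Γ),
       ∃ S' : Finset S, S'.Nonempty ∧ ∀ γ ∈ Γ, ∀ s ∈ S', γ s ∈ S',
       ∃ s : S, Set.Finite {t : S | ∃ γ ∈ Γ, γ s = t},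
       ∀ s : S, Set.Finite {t : S | ∃ γ ∈ Γ, γ s = t}] :=
  compact_iff_finite_orbits_general Γ hclosed hsd
end

section
/- Let Γ be a group of permutations of a countable set S and c' : S' → C a partial colouring with arbitrary (possibly infinite) domain S' ⊆ S. Then the stabiliser of c' in Γ is closed in the permutation topology. -/
/-- The stabiliser of a partial colouring `c' : S' → C` in `Γ`: the set of `γ ∈ Γ` for
which there exist full colourings `c₁, c₂ : S → C`, both extending `c'`, with
`c₁ ∘ γ = c₂`. -/
def partialStab {S C : Type*} (Γ : Subgroup (Equiv.Perm S)) (S' : Set S) (c' : S' → C) :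
    Set Γ :=
  {γ : Γ | ∃ c₁ c₂ : S → C,
    (∀ s : S', c₁ s = c' s ∧ c₂ s = c' s) ∧ ∀ s : S, c₁ ((γ : Equiv.Perm S) s) = c₂ s}

/-- The stabiliser of a partial colouring (with arbitrary, possibly infinite, domain) is
closed in the permutation topology. -/
theorem partial_stabiliser_closed {S C : Type*} [Countable S]
    (Γ : Subgroup (Equiv.Perm S)) (S' : Set S) (c' : S' → C) :
    @IsClosed Γ (grpTop Γ) (partialStab Γ S' c') := by
  classical
  letI : TopologicalSpace S := ⊥
  haveI : DiscreteTopology S := ⟨rfl⟩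
  letI : TopologicalSpace (Equiv.Perm S) := permTop S
  letI : TopologicalSpace Γ := grpTop Γ
  rcases isEmpty_or_nonempty C with hC | hC
  · rcases isEmpty_or_nonempty S with hS | hS
    · convert isClosed_univ
      ext γ
      simp only [partialStab, Set.mem_setOf_eq, Set.mem_univ, iff_true]
      exact ⟨isEmptyElim, isEmptyElim, fun s => isEmptyElim (s : S), fun s => isEmptyElim s⟩
    · convert isClosed_empty
      ext γ
      simp only [partialStab, Set.mem_setOf_eq, Set.mem_empty_iff_false, iff_false]
      rintro ⟨c₁, -, -, -⟩
      exact hC.elim (c₁ hS.some)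
  · inhabit C
    have hset : partialStab Γ S' c' =
        ⋂ t : S', {γ : Γ | ∀ h : ((γ : Equiv.Perm S) (t : S)) ∈ S',
          c' ⟨(γ : Equiv.Perm S) (t : S), h⟩ = c' t} := by
      ext γ
      simp only [partialStab, Set.mem_setOf_eq, Set.mem_iInter]
      constructor
      · rintro ⟨c₁, c₂, hext, hcomp⟩ t h
        have h1 := (hext ⟨(γ : Equiv.Perm S) (t : S), h⟩).1
        have h2 := (hext t).2
        rw [← h1, hcomp]
        exact h2
      · intro H
        set g := (γ : Equiv.Perm S) with hg
        refine ⟨fun x => if h : x ∈ S' then c' ⟨x, h⟩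
            else if h2 : g⁻¹ x ∈ S' then c' ⟨g⁻¹ x, h2⟩ else default,
          fun s => (if h : g s ∈ S' then c' ⟨g s, h⟩
            else if h2 : g⁻¹ (g s) ∈ S' then c' ⟨g⁻¹ (g s), h2⟩ else default),
          fun s => ⟨dif_pos s.2, ?_⟩, fun s => rfl⟩
        by_cases h : g (s : S) ∈ S'
        · simp only [dif_pos h]
          exact H s h
        · have hmem : g⁻¹ (g (s : S)) ∈ S' := by simp [s.2]
          simp only [dif_neg h, dif_pos hmem]
          have : (⟨g⁻¹ (g (s : S)), hmem⟩ : S') = s := Subtype.ext (by simp)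
          rw [this]
    rw [hset]
    refine isClosed_iInter fun t => ?_
    have h1 : Continuous (fun γ : Γ => (γ : Equiv.Perm S)) := continuous_induced_dom
    have h2 : Continuous (fun g : Equiv.Perm S => (g : S → S)) := continuous_induced_dom
    have hcont : Continuous (fun γ : Γ => (γ : Equiv.Perm S) (t : S)) :=
      (continuous_apply (t : S)).comp (h2.comp h1)
    exact (isClosed_discrete {x : S | ∀ h : x ∈ S', c' ⟨x, h⟩ = c' t}).preimage hcont
end

section
/- Let G be a finite graph on n vertices whose every non-identity automorphism moves at least m vertices, and suppose 2^{m/2} ≥ |Aut G|. Then G has a distinguishing 2-colouring, i.e., a colouring c : V(G) → {0,1} such that the only automorphism φ with c ∘ φ = c is the identity. -/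
/-!
A colouring fixed by a permutation `π` is constant on the cycles of `π`. Every cycle meeting the
support of `π` has length at least `2`, so if `π` moves at least `m` of the `n` points it has at
most `n - m / 2` cycles and fixes at most `k ^ (n - m / 2)` of the `k ^ n` colourings with `k`
colours. Fewer than `|Γ| ≤ k ^ (m / 2)` elements act nontrivially, so together they fix fewer
than `k ^ n` colourings, and any colouring outside their union is distinguishing.
-/

open Finset

namespace Equiv.Perm

variable {V α : Type*}

theorem SameCycle.eq_of_forall_apply_eq [Finite V] {π : Perm V} {c : V → α}
    (hc : ∀ v, c (π v) = c v) {x y : V} (h : π.SameCycle x y) : c x = c y := by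
  obtain ⟨i, -, -, rfl⟩ := h.exists_pow_eq''
  rw [coe_pow, ← Function.comp_apply (f := c), Function.iterate_invariant (funext hc)]

def invariantFunEquiv [Finite V] (π : Perm V) :
    {c : V → α // ∀ v, c (π v) = c v} ≃ (Quotient (SameCycle.setoid π) → α) where
  toFun c := Quotient.lift c.1 fun _ _ => SameCycle.eq_of_forall_apply_eq c.2
  invFun f := ⟨f ∘ Quotient.mk _,
    fun v => congrArg f (Quotient.sound (sameCycle_apply_left.2 (SameCycle.refl π v)))⟩
  left_inv _ := rfl
  right_inv _ := funext (Quotient.ind fun _ => rfl)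

variable [Fintype V] [DecidableEq V]

theorem two_mul_card_quotient_sameCycle_add_card_support_le (π : Perm V) :
    2 * Nat.card (Quotient (SameCycle.setoid π)) + #π.support ≤ 2 * Fintype.card V := by
  classical
  set q : V → Quotient (SameCycle.setoid π) := Quotient.mk _
  have hcard : Nat.card (Quotient (SameCycle.setoid π)) = #(univ.image q) := by
    rw [image_univ_of_surjective Quotient.mk_surjective, card_univ, Nat.card_eq_fintype_card]
  have hsplit : #(univ.image q) ≤ #(π.supportᶜ.image q) + #(π.support.image q) := by
    rw [← union_compl π.support, image_union, add_comm]
    exact card_union_le _ _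
  -- a cycle through `v ∈ π.support` contains the two points `v ≠ π v`
  have hcycles : 2 * #(π.support.image q) ≤ #π.support := by
    refine mul_card_image_le_card _ _ fun b hb => ?_
    obtain ⟨v, hv, rfl⟩ := mem_image.1 hb
    refine one_lt_card.2 ⟨π v, ?_, v, ?_, mem_support.1 hv⟩
    · exact mem_filter.2 ⟨apply_mem_support.2 hv,
        Quotient.sound (sameCycle_apply_left.2 (SameCycle.refl π v))⟩
    · exact mem_filter.2 ⟨hv, rfl⟩
  have hfixed : #(π.supportᶜ.image q) ≤ Fintype.card V - #π.support :=
    card_compl π.support ▸ card_image_le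
  have := card_le_univ π.support
  omega

theorem card_invariant_fun_le [Finite α] [Nonempty α] {π : Perm V} {m : ℕ}
    (hπ : m ≤ #π.support) :
    (Nat.card {c : V → α // ∀ v, c (π v) = c v} : ℝ) ≤
      (Nat.card α : ℝ) ^ ((Fintype.card V : ℝ) - m / 2) := by
  rw [Nat.card_congr (invariantFunEquiv π), Nat.card_fun, Nat.cast_pow, ← Real.rpow_natCast]
  refine Real.rpow_le_rpow_of_exponent_le (Nat.one_le_cast.2 Nat.card_pos) ?_
  have hQ : (2 * Nat.card (Quotient (SameCycle.setoid π)) + #π.support : ℝ) ≤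
      2 * Fintype.card V := by
    exact_mod_cast two_mul_card_quotient_sameCycle_add_card_support_le π
  have hm : (m : ℝ) ≤ #π.support := by exact_mod_cast hπ
  linarith

end Equiv.Perm

theorem MulAction.exists_distinguishing_colouring_of_card_le {Γ V α : Type*} [Group Γ] [Finite Γ]
    [MulAction Γ V] [Fintype V] [DecidableEq V] [Finite α] [Nonempty α] (m : ℕ)
    (hm : ∀ g : Γ, (∀ v : V, g • v = v) ∨ m ≤ #{v : V | g • v ≠ v})
    (hcard : (Nat.card Γ : ℝ) ≤ (Nat.card α : ℝ) ^ ((m : ℝ) / 2)) :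
    ∃ c : V → α, ∀ g : Γ, (∀ v : V, c (g • v) = c v) → ∀ v : V, g • v = v := by
  classical
  have := Fintype.ofFinite Γ
  have := Fintype.ofFinite α
  set k : ℝ := (Nat.card α : ℝ)
  set N : Finset Γ := {g | ∃ v : V, g • v ≠ v}
  set Fix : Γ → Finset (V → α) := fun g => {c | ∀ v, c (g • v) = c v}
  by_contra! hcon
  have hcover : (univ : Finset (V → α)) ⊆ N.biUnion Fix := fun c _ => by
    obtain ⟨g, hgc, hg⟩ := hcon c
    exact mem_biUnion.2 ⟨g, mem_filter.2 ⟨mem_univ g, hg⟩, mem_filter.2 ⟨mem_univ c, hgc⟩⟩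
  have hN : (#N : ℝ) < Nat.card Γ := by
    rw [Nat.card_eq_fintype_card, ← card_univ]
    have h1 : (1 : Γ) ∉ N := by simp [N]
    exact_mod_cast card_lt_card (ssubset_univ_iff.2 (ne_of_mem_of_not_mem' (mem_univ 1) h1).symm)
  have hFix : ∀ g ∈ N, (#(Fix g) : ℝ) ≤ k ^ ((Fintype.card V : ℝ) - m / 2) := fun g hg => by
    rw [← Fintype.card_subtype, ← Nat.card_eq_fintype_card]
    exact Equiv.Perm.card_invariant_fun_le (π := MulAction.toPerm g)
      ((hm g).resolve_left (by simpa [N] using hg))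
  have hk : 0 < k := Nat.cast_pos.2 Nat.card_pos
  have : k ^ (Fintype.card V : ℝ) < k ^ (Fintype.card V : ℝ) := calc
    k ^ (Fintype.card V : ℝ) = #(univ : Finset (V → α)) := by
      rw [card_univ, Fintype.card_fun, Nat.cast_pow, Real.rpow_natCast]
      simp only [k, Nat.card_eq_fintype_card]
    _ ≤ ∑ g ∈ N, (#(Fix g) : ℝ) := by exact_mod_cast (card_le_card hcover).trans card_biUnion_le
    _ ≤ #N * k ^ ((Fintype.card V : ℝ) - m / 2) := by
      simpa using sum_le_card_nsmul N _ _ hFix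
    _ < Nat.card Γ * k ^ ((Fintype.card V : ℝ) - m / 2) := by gcongr
    _ ≤ k ^ ((m : ℝ) / 2) * k ^ ((Fintype.card V : ℝ) - m / 2) := by gcongr
    _ = k ^ (Fintype.card V : ℝ) := by rw [← Real.rpow_add hk]; ring_nf
  exact this.false

open Classical in
/-- Russel–Sundaram: if every non-identity automorphism of a finite graph `G` moves at
least `m` vertices and `2^(m/2) ≥ |Aut G|`, then `G` has a distinguishing `2`-colouring. -/
theorem finite_motion_distinguishing {V : Type*} [Fintype V] (G : SimpleGraph V) (m : ℕ)
    (hm : ∀ φ : G ≃g G, (∀ v, φ v = v) ∨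
      m ≤ (Finset.univ.filter fun v => φ v ≠ v).card)
    (hcard : (Nat.card (G ≃g G) : ℝ) ≤ 2 ^ ((m : ℝ) / 2)) :
    ∃ c : V → Bool, ∀ φ : G ≃g G, (∀ v, c (φ v) = c v) → ∀ v, φ v = v := by
  have : Finite (G ≃g G) := Finite.of_injective _ (DFunLike.coe_injective (F := G ≃g G))
  exact MulAction.exists_distinguishing_colouring_of_card_le m hm (by simpa using hcard)
end

section
/- Let S be a finite set and Δ a finite set of non-trivial permutations of S, each of which moves at least m points. If c is a uniformly random 2-colouring of S, then the probability that some γ ∈ Δ preserves c is at most |Δ| · 2^{-m/2}. -/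
open Classical Finset

private lemma zpow_colour {S : Type*} (γ : Equiv.Perm S) (c : S → Bool)
    (h : ∀ s, c (γ s) = c s) : ∀ (i : ℤ) (s : S), c ((γ ^ i) s) = c s := by
  have hn : ∀ (n : ℕ) (s : S), c ((γ ^ n) s) = c s := by
    intro n
    induction n with
    | zero => intro s; simp
    | succ n ih =>
      intro s
      rw [pow_succ, Equiv.Perm.mul_apply]
      rw [ih (γ s), h s]
  intro i s
  cases i with
  | ofNat n => exact hn n s
  | negSucc n =>
    have key := hn (n + 1) ((γ ^ (Int.negSucc n)) s)
    rw [zpow_negSucc] at *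
    rw [← Equiv.Perm.mul_apply, mul_inv_cancel, Equiv.Perm.one_apply] at key
    exact key.symm

private lemma fix_card_eq {S : Type*} [Fintype S] (γ : Equiv.Perm S) :
    (Finset.univ.filter fun c : S → Bool => ∀ s, c (γ s) = c s).card =
      2 ^ Fintype.card (Quotient (Equiv.Perm.SameCycle.setoid γ)) := by
  set r := Equiv.Perm.SameCycle.setoid γ with hr
  have e : {c : S → Bool // ∀ s, c (γ s) = c s} ≃ (Quotient r → Bool) :=
    { toFun := fun c => Quotient.lift c.1 (by
        rintro a b ⟨i, hi⟩
        rw [← hi]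
        exact (zpow_colour γ c.1 c.2 i a).symm)
      invFun := fun f => ⟨fun s => f (Quotient.mk r s), fun s => by
        have : Quotient.mk r (γ s) = Quotient.mk r s :=
          Quotient.sound (Equiv.Perm.sameCycle_apply_left.2 (Equiv.Perm.SameCycle.refl γ s))
        simp only [this]⟩
      left_inv := fun c => rfl
      right_inv := fun f => by
        funext q
        induction q using Quotient.ind
        rfl }
  rw [← Fintype.card_subtype, Fintype.card_congr e, Fintype.card_fun, Fintype.card_bool]

private lemma orbit_count {S : Type*} [Fintype S] (γ : Equiv.Perm S) :
    2 * Fintype.card (Quotient (Equiv.Perm.SameCycle.setoid γ)) +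
      (Finset.univ.filter fun s => γ s ≠ s).card ≤ 2 * Fintype.card S := by
  set r := Equiv.Perm.SameCycle.setoid γ with hr
  have h1 : Fintype.card S =
      ∑ q : Quotient r, (Finset.univ.filter fun s => Quotient.mk r s = q).card := by
    rw [← Finset.card_univ]
    exact Finset.card_eq_sum_card_fiberwise (fun s _ => Finset.mem_univ _)
  have h2 : (Finset.univ.filter fun s => γ s ≠ s).card =
      ∑ q : Quotient r,
        ((Finset.univ.filter fun s => γ s ≠ s).filter fun s => Quotient.mk r s = q).card :=
    Finset.card_eq_sum_card_fiberwise (fun s _ => Finset.mem_univ _)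
  have key : ∀ q : Quotient r,
      2 + ((Finset.univ.filter fun s => γ s ≠ s).filter fun s => Quotient.mk r s = q).card ≤
        2 * (Finset.univ.filter fun s => Quotient.mk r s = q).card := by
    intro q
    obtain ⟨a, ha⟩ := Quotient.exists_rep q
    by_cases hfix : γ a = a
    · have hfib : (Finset.univ.filter fun s => Quotient.mk r s = q) = {a} := by
        ext s
        simp only [Finset.mem_filter, Finset.mem_univ, true_and, Finset.mem_singleton, ← ha]
        constructor
        · intro hs
          exact (Quotient.exact hs : Equiv.Perm.SameCycle γ s a).eq_of_right hfix
        · rintro rfl; rfl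
      have hmov : ((Finset.univ.filter fun s => γ s ≠ s).filter fun s => Quotient.mk r s = q)
          = ∅ := by
        ext s
        simp only [Finset.mem_filter, Finset.mem_univ, true_and, Finset.notMem_empty,
          iff_false, not_and, ← ha]
        intro hs hq
        exact hs (((Quotient.exact hq : Equiv.Perm.SameCycle γ s a).apply_eq_self_iff).2 hfix)
      rw [hfib, hmov]
      simp
    · have hsub : ((Finset.univ.filter fun s => γ s ≠ s).filter fun s => Quotient.mk r s = q)
          ⊆ (Finset.univ.filter fun s => Quotient.mk r s = q) := by
        intro s hs
        simp only [Finset.mem_filter] at hs ⊢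
        exact ⟨Finset.mem_univ _, hs.2⟩
      have hpair : ({a, γ a} : Finset S) ⊆ (Finset.univ.filter fun s => Quotient.mk r s = q) := by
        intro s hs
        simp only [Finset.mem_insert, Finset.mem_singleton] at hs
        simp only [Finset.mem_filter, Finset.mem_univ, true_and]
        rcases hs with rfl | rfl
        · exact ha
        · rw [← ha]
          exact Quotient.sound (Equiv.Perm.sameCycle_apply_left.2 (Equiv.Perm.SameCycle.refl γ a))
      have h2le : 2 ≤ (Finset.univ.filter fun s => Quotient.mk r s = q).card := by
        have := Finset.card_le_card hpair
        rwa [Finset.card_pair (Ne.symm hfix)] at this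
      have hle := Finset.card_le_card hsub
      omega
  calc 2 * Fintype.card (Quotient r) + (Finset.univ.filter fun s => γ s ≠ s).card
      = ∑ q : Quotient r,
          (2 + ((Finset.univ.filter fun s => γ s ≠ s).filter fun s =>
            Quotient.mk r s = q).card) := by
        rw [Finset.sum_add_distrib, Finset.sum_const, ← h2, Finset.card_univ, smul_eq_mul,
          mul_comm]
    _ ≤ ∑ q : Quotient r, 2 * (Finset.univ.filter fun s => Quotient.mk r s = q).card :=
        Finset.sum_le_sum fun q _ => key q
    _ = 2 * Fintype.card S := by rw [← Finset.mul_sum, ← h1]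

open Classical in
/-- For a finite set `S` and a finite set `Δ` of non-trivial permutations of `S`, each
moving at least `m` points, the probability (for a uniformly random `2`-colouring `c` of
`S`) that some `γ ∈ Δ` preserves `c` is at most `|Δ| · 2^(-m/2)`. -/
theorem random_colouring_breaks_motion {S : Type*} [Fintype S] (m : ℕ)
    (Δ : Finset (Equiv.Perm S)) (h1 : ∀ γ ∈ Δ, γ ≠ 1)
    (hm : ∀ γ ∈ Δ, m ≤ (Finset.univ.filter fun s => γ s ≠ s).card) :
    ((Finset.univ.filter fun c : S → Bool => ∃ γ ∈ Δ, ∀ s, c (γ s) = c s).card : ℝ) /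
        2 ^ Fintype.card S ≤ (Δ.card : ℝ) * 2 ^ (-(m : ℝ) / 2) := by
  have hpow : (0:ℝ) < 2 ^ Fintype.card S := by positivity
  rw [div_le_iff₀ hpow]
  -- union bound at Nat level
  have hsub : (Finset.univ.filter fun c : S → Bool => ∃ γ ∈ Δ, ∀ s, c (γ s) = c s) ⊆
      Δ.biUnion fun γ => Finset.univ.filter fun c : S → Bool => ∀ s, c (γ s) = c s := by
    intro c hc
    simp only [Finset.mem_filter, Finset.mem_univ, true_and] at hc
    obtain ⟨γ, hγ, hcγ⟩ := hc
    exact Finset.mem_biUnion.2 ⟨γ, hγ, Finset.mem_filter.2 ⟨Finset.mem_univ _, hcγ⟩⟩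
  have hnat : (Finset.univ.filter fun c : S → Bool => ∃ γ ∈ Δ, ∀ s, c (γ s) = c s).card ≤
      ∑ γ ∈ Δ, (Finset.univ.filter fun c : S → Bool => ∀ s, c (γ s) = c s).card :=
    le_trans (Finset.card_le_card hsub) (Finset.card_biUnion_le)
  have hterm : ∀ γ ∈ Δ,
      ((Finset.univ.filter fun c : S → Bool => ∀ s, c (γ s) = c s).card : ℝ) ≤
        2 ^ (-(m : ℝ) / 2) * 2 ^ Fintype.card S := by
    intro γ hγ
    rw [fix_card_eq γ]
    set k := Fintype.card (Quotient (Equiv.Perm.SameCycle.setoid γ))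
    have hk : 2 * k + m ≤ 2 * Fintype.card S :=
      le_trans (Nat.add_le_add_left (hm γ hγ) (2 * k)) (orbit_count γ)
    have hkr : (k : ℝ) ≤ -(m : ℝ) / 2 + Fintype.card S := by
      have : (2 * k + m : ℝ) ≤ 2 * Fintype.card S := by exact_mod_cast hk
      linarith
    calc ((2 ^ k : ℕ) : ℝ) = (2 : ℝ) ^ (k : ℝ) := by
          rw [Real.rpow_natCast]; push_cast; ring
      _ ≤ (2 : ℝ) ^ (-(m : ℝ) / 2 + Fintype.card S) :=
          Real.rpow_le_rpow_of_exponent_le one_le_two hkr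
      _ = 2 ^ (-(m : ℝ) / 2) * 2 ^ Fintype.card S := by
          rw [Real.rpow_add (by norm_num), Real.rpow_natCast]
  calc ((Finset.univ.filter fun c : S → Bool => ∃ γ ∈ Δ, ∀ s, c (γ s) = c s).card : ℝ)
      ≤ ∑ γ ∈ Δ, ((Finset.univ.filter fun c : S → Bool => ∀ s, c (γ s) = c s).card : ℝ) := by
        exact_mod_cast hnat
    _ ≤ ∑ γ ∈ Δ, (2 ^ (-(m : ℝ) / 2) * 2 ^ Fintype.card S) := Finset.sum_le_sum hterm
    _ = (Δ.card : ℝ) * 2 ^ (-(m : ℝ) / 2) * 2 ^ Fintype.card S := by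
        rw [Finset.sum_const, nsmul_eq_mul, mul_assoc]
end

section
/- Let Γ be a countable group of permutations of a countable set S such that every non-trivial element of Γ moves infinitely many points. Then a random 2-colouring of S (colours chosen i.i.d. uniformly from {0,1}) is almost surely Γ-distinguishing, i.e., almost surely no non-trivial element of Γ preserves the colouring. -/
open MeasureTheory

private lemma exists_good_finset {S : Type*} (γ : Equiv.Perm S)
    (hinf : Set.Infinite {s : S | γ s ≠ s}) (n : ℕ) :
    ∃ T : Finset S, T.card = n ∧ ∀ s ∈ T, ∀ t ∈ T, γ s ≠ t := by
  classical
  induction n with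
  | zero => exact ⟨∅, rfl, by simp⟩
  | succ n ih =>
    obtain ⟨T, hcard, hdisj⟩ := ih
    have hne : ({s : S | γ s ≠ s} \ ↑(T ∪ T.image γ ∪ T.image γ.symm)).Nonempty :=
      (hinf.diff (Finset.finite_toSet _)).nonempty
    obtain ⟨s, hs⟩ := hne
    have hsmov : γ s ≠ s := hs.1
    have hsnot : s ∉ T ∪ T.image γ ∪ T.image γ.symm := hs.2
    simp only [Finset.mem_union, not_or, Finset.mem_image, not_exists] at hsnot
    obtain ⟨⟨hsT, hsImg⟩, hsImg'⟩ := hsnot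
    refine ⟨insert s T, by rw [Finset.card_insert_of_notMem hsT, hcard], ?_⟩
    intro a ha b hb
    rcases Finset.mem_insert.1 ha with rfl | haT <;>
      rcases Finset.mem_insert.1 hb with rfl | hbT
    · exact hsmov
    · -- γ s ≠ b for b ∈ T : else s = γ.symm b
      intro h
      exact hsImg' b (by simpa using And.intro hbT (by rw [← h]; simp))
    · -- γ a ≠ s for a ∈ T
      intro h
      exact hsImg a ⟨haT, h⟩
    · exact hdisj a haT b hbT

private lemma single_null {S : Type*} [Countable S] (γ : Equiv.Perm S)
    (hinf : Set.Infinite {s : S | γ s ≠ s})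
    (μ : Measure (S → Bool))
    (hμ : ∀ (F : Finset S) (f : S → Bool),
      μ {c : S → Bool | ∀ s ∈ F, c s = f s} = (2 : ENNReal)⁻¹ ^ F.card) :
    μ {c : S → Bool | ∀ s, c (γ s) = c s} = 0 := by
  classical
  have hbound : ∀ n : ℕ, μ {c : S → Bool | ∀ s, c (γ s) = c s} ≤ (2 : ENNReal)⁻¹ ^ n := by
    intro n
    obtain ⟨T, hcard, hdisj⟩ := exists_good_finset γ hinf n
    set F : Finset S := T ∪ T.image γ with hF
    have hdisjTI : Disjoint T (T.image γ) := by
      rw [Finset.disjoint_right]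
      intro a ha haT
      obtain ⟨t, htT, ht⟩ := Finset.mem_image.1 ha
      exact hdisj t htT a haT ht
    have hcardF : F.card = 2 * n := by
      rw [hF, Finset.card_union_of_disjoint hdisjTI,
        Finset.card_image_of_injective T γ.injective, hcard]
      ring
    -- the family of cylinder functions
    set fv : ({x // x ∈ T} → Bool) → S → Bool := fun v s =>
      if h : γ.symm s ∈ T then v ⟨γ.symm s, h⟩
      else if h : s ∈ T then v ⟨s, h⟩ else true with hfv
    have hsub : {c : S → Bool | ∀ s, c (γ s) = c s} ⊆
        ⋃ v : ({x // x ∈ T} → Bool), {c : S → Bool | ∀ s ∈ F, c s = fv v s} := by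
      intro c hc
      refine Set.mem_iUnion.2 ⟨fun x => c x, ?_⟩
      intro s hsF
      rcases Finset.mem_union.1 hsF with hsT | hsI
      · have h1 : γ.symm s ∉ T := by
          intro h
          exact hdisj _ h s hsT (by simp)
        simp [hfv, h1, hsT]
      · obtain ⟨t, htT, rfl⟩ := Finset.mem_image.1 hsI
        have h1 : γ.symm (γ t) ∈ T := by simpa using htT
        have : fv (fun x => c x) (γ t) = c t := by
          simp only [hfv, Equiv.symm_apply_apply]
          rw [dif_pos htT]
        rw [this, hc t]
    calc μ {c : S → Bool | ∀ s, c (γ s) = c s}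
        ≤ ∑' v : ({x // x ∈ T} → Bool), μ {c : S → Bool | ∀ s ∈ F, c s = fv v s} :=
          le_trans (measure_mono hsub) (measure_iUnion_le _)
      _ = ∑' _v : ({x // x ∈ T} → Bool), (2 : ENNReal)⁻¹ ^ (2 * n) := by
          simp_rw [hμ F, hcardF]
      _ = (Fintype.card ({x // x ∈ T} → Bool) : ENNReal) * (2 : ENNReal)⁻¹ ^ (2 * n) := by
          rw [tsum_fintype]; simp [Finset.sum_const, nsmul_eq_mul]
      _ = (2 : ENNReal) ^ n * (2 : ENNReal)⁻¹ ^ (2 * n) := by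
          rw [Fintype.card_fun]
          simp [hcard]
      _ = (2 : ENNReal)⁻¹ ^ n := by
          rw [two_mul, pow_add, ← mul_assoc, ← mul_pow,
            ENNReal.mul_inv_cancel (by norm_num) (by norm_num), one_pow, one_mul]
  have htend : Filter.Tendsto (fun n : ℕ => (2 : ENNReal)⁻¹ ^ n) Filter.atTop (nhds 0) :=
    ENNReal.tendsto_pow_atTop_nhds_zero_of_lt_one (by
      simp [ENNReal.inv_lt_one])
  have := ge_of_tendsto' htend hbound
  simpa using this

/-- Let `Γ` be a countable group of permutations of a countable set `S` with infinite
motion (every non-trivial element moves infinitely many points). Then a random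
`2`-colouring of `S` (i.i.d. uniform colours, encoded by the cylinder condition on `μ`)
is almost surely `Γ`-distinguishing: almost surely no non-trivial element of `Γ`
preserves the colouring. -/
theorem random_colouring_distinguishing_countable {S : Type*} [Countable S]
    (Γ : Subgroup (Equiv.Perm S)) (hΓ : Set.Countable (Γ : Set (Equiv.Perm S)))
    (hmotion : ∀ γ ∈ Γ, γ ≠ 1 → Set.Infinite {s : S | γ s ≠ s})
    (μ : Measure (S → Bool)) [IsProbabilityMeasure μ]
    (hμ : ∀ (F : Finset S) (f : S → Bool),
      μ {c : S → Bool | ∀ s ∈ F, c s = f s} = (2 : ENNReal)⁻¹ ^ F.card) :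
    μ {c : S → Bool | ∃ γ ∈ Γ, γ ≠ 1 ∧ ∀ s, c (γ s) = c s} = 0 := by
  have hsub : {c : S → Bool | ∃ γ ∈ Γ, γ ≠ 1 ∧ ∀ s, c (γ s) = c s} ⊆
      ⋃ γ ∈ (Γ : Set (Equiv.Perm S)), {c : S → Bool | γ ≠ 1 ∧ ∀ s, c (γ s) = c s} := by
    intro c hc
    obtain ⟨γ, hγΓ, hγ1, hfix⟩ := hc
    exact Set.mem_biUnion hγΓ ⟨hγ1, hfix⟩
  refine measure_mono_null hsub ?_
  refine (measure_biUnion_null_iff hΓ).2 ?_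
  intro γ hγΓ
  by_cases hγ1 : γ = 1
  · have : {c : S → Bool | γ ≠ 1 ∧ ∀ s, c (γ s) = c s} = ∅ := by
      ext c; simp [hγ1]
    simp [this]
  · refine measure_mono_null (fun c hc => hc.2) ?_
    exact single_null γ (hmotion γ hγΓ hγ1) μ hμ
end

section
/- Let Γ be a subdegree finite group of permutations of a countable set S. Define s ∼_Γ t iff there exists φ ∈ Γ with φs = t and for all but finitely many x ∈ S, the suborbits satisfy Γ_s x = φ Γ_s x. Then ∼_Γ is an equivalence relation on S. -/
/-- The suborbit `Γ_s x`: the orbit of `x` under the stabiliser of `s` in `Γ`. -/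
def suborbit {S : Type*} (Γ : Subgroup (Equiv.Perm S)) (s x : S) : Set S :=
  {u : S | ∃ γ ∈ Γ, γ s = s ∧ γ x = u}

/-- `s ∼_Γ t` iff some `φ ∈ Γ` maps `s` to `t` and for all but finitely many `x ∈ S` the
suborbits satisfy `Γ_s x = φ Γ_s x`. -/
def simRel {S : Type*} (Γ : Subgroup (Equiv.Perm S)) (s t : S) : Prop :=
  ∃ φ ∈ Γ, φ s = t ∧
    Set.Finite {x : S | (fun u => φ u) '' suborbit Γ s x ≠ suborbit Γ s x}

lemma mem_suborbit_self {S : Type*} (Γ : Subgroup (Equiv.Perm S)) (s x : S) :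
    x ∈ suborbit Γ s x :=
  ⟨1, Γ.one_mem, rfl, rfl⟩

lemma suborbit_eq_of_mem {S : Type*} {Γ : Subgroup (Equiv.Perm S)} {s x y : S}
    (h : y ∈ suborbit Γ s x) : suborbit Γ s y = suborbit Γ s x := by
  obtain ⟨δ, hδ, hδs, hδx⟩ := h
  ext u
  constructor
  · rintro ⟨γ, hγ, hγs, rfl⟩
    exact ⟨γ * δ, Γ.mul_mem hγ hδ, by simp [Equiv.Perm.mul_apply, hδs, hγs],
      by simp [Equiv.Perm.mul_apply, hδx]⟩
  · rintro ⟨γ, hγ, hγs, rfl⟩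
    refine ⟨γ * δ⁻¹, Γ.mul_mem hγ (Γ.inv_mem hδ), ?_, ?_⟩
    · have h : δ⁻¹ s = s := δ.injective (by simp [hδs])
      simp [Equiv.Perm.mul_apply, h, hγs]
    · have h : δ⁻¹ y = x := δ.injective (by simp [hδx])
      simp [Equiv.Perm.mul_apply, h]

lemma suborbit_conj {S : Type*} {Γ : Subgroup (Equiv.Perm S)} {s t : S} {φ : Equiv.Perm S}
    (hφ : φ ∈ Γ) (hφs : φ s = t) (x : S) :
    suborbit Γ t x = (fun u => φ u) '' suborbit Γ s (φ⁻¹ x) := by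
  ext u
  constructor
  · rintro ⟨γ, hγ, hγt, rfl⟩
    refine ⟨φ⁻¹ (γ x), ⟨φ⁻¹ * γ * φ, Γ.mul_mem (Γ.mul_mem (Γ.inv_mem hφ) hγ) hφ, ?_, ?_⟩, ?_⟩
    · have h : φ⁻¹ t = s := φ.injective (by simp [hφs])
      simp [Equiv.Perm.mul_apply, hφs, hγt, h]
    · simp [Equiv.Perm.mul_apply]
    · simp
  · rintro ⟨v, ⟨δ, hδ, hδs, rfl⟩, rfl⟩
    refine ⟨φ * δ * φ⁻¹, Γ.mul_mem (Γ.mul_mem hφ hδ) (Γ.inv_mem hφ), ?_, ?_⟩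
    · simp [Equiv.Perm.mul_apply, ← hφs, hδs]
    · simp [Equiv.Perm.mul_apply]

/-- For a subdegree finite group `Γ` of permutations of a countable set `S`, the relation
`∼_Γ` is an equivalence relation on `S`. -/
theorem simRel_equivalence {S : Type*} [Countable S] (Γ : Subgroup (Equiv.Perm S))
    (hsd : SubdegreeFinite Γ) :
    Equivalence (simRel Γ) := by
  constructor
  · -- reflexivity
    intro s
    refine ⟨1, Γ.one_mem, rfl, ?_⟩
    convert Set.finite_empty
    ext x
    simp [Set.image_id']
  · -- symmetry
    rintro s t ⟨φ, hφ, hφs, hF⟩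
    refine ⟨φ⁻¹, Γ.inv_mem hφ, by rw [← hφs]; simp, ?_⟩
    apply Set.Finite.subset (hF.image (fun u => φ u))
    intro x hx
    by_contra hxn
    apply hx
    have hnot : φ⁻¹ x ∉ {x : S | (fun u => φ u) '' suborbit Γ s x ≠ suborbit Γ s x} := by
      intro hmem
      exact hxn ⟨φ⁻¹ x, hmem, by simp⟩
    have heq : (fun u => φ u) '' suborbit Γ s (φ⁻¹ x) = suborbit Γ s (φ⁻¹ x) := by
      simpa using hnot
    have hc := suborbit_conj hφ hφs x
    show (fun u => φ⁻¹ u) '' suborbit Γ t x = suborbit Γ t x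
    rw [hc, Set.image_image]
    simpa using heq.symm
  · -- transitivity
    rintro s t r ⟨φ, hφ, hφs, hF₁⟩ ⟨ψ, hψ, hψt, hF₂⟩
    refine ⟨ψ * φ, Γ.mul_mem hψ hφ, by simp [Equiv.Perm.mul_apply, hφs, hψt], ?_⟩
    set F₁ := {x : S | (fun u => φ u) '' suborbit Γ s x ≠ suborbit Γ s x} with hF₁def
    set F₂ := {x : S | (fun u => ψ u) '' suborbit Γ t x ≠ suborbit Γ t x} with hF₂def
    apply Set.Finite.subset ((hF₁.union hF₂).union (hF₁.image (fun u => φ u)))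
    intro x hx
    by_contra hxn
    apply hx
    have hx1 : x ∉ F₁ := fun h => hxn (Or.inl (Or.inl h))
    have hx2 : x ∉ F₂ := fun h => hxn (Or.inl (Or.inr h))
    have hx3 : x ∉ (fun u => φ u) '' F₁ := fun h => hxn (Or.inr h)
    have h1 : (fun u => φ u) '' suborbit Γ s x = suborbit Γ s x := by
      by_contra h; exact hx1 h
    have h2 : (fun u => ψ u) '' suborbit Γ t x = suborbit Γ t x := by
      by_contra h; exact hx2 h
    have hinv : φ⁻¹ x ∉ F₁ := by
      intro hmem
      exact hx3 ⟨φ⁻¹ x, hmem, by simp⟩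
    have h1' : (fun u => φ u) '' suborbit Γ s (φ⁻¹ x) = suborbit Γ s (φ⁻¹ x) := by
      by_contra h; exact hinv h
    have hts : suborbit Γ t x = suborbit Γ s x := by
      rw [suborbit_conj hφ hφs x, h1']
      have hxmem : x ∈ suborbit Γ s (φ⁻¹ x) := by
        rw [← h1']
        exact ⟨φ⁻¹ x, mem_suborbit_self Γ s (φ⁻¹ x), by simp⟩
      exact (suborbit_eq_of_mem hxmem).symm
    show (fun u => (ψ * φ) u) '' suborbit Γ s x = suborbit Γ s x
    have himg : (fun u => (ψ * φ) u) '' suborbit Γ s x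
        = (fun u => ψ u) '' ((fun u => φ u) '' suborbit Γ s x) := by
      rw [Set.image_image]
      rfl
    rw [himg, h1, ← hts, h2, hts]
end

section
/- Let T_∞ be the regular tree in which every vertex has countably infinite degree, and let c be a random colouring of its vertices with finitely many colours (colours chosen i.i.d. uniformly). Then almost surely there exists a non-trivial automorphism of T_∞ preserving c. In fact, any colouring in which every vertex has infinitely many neighbours of each colour admits a non-trivial colour-preserving automorphism. -/
/-!
Root the tree at `r`. Every vertex has countably infinitely many children of each colour, so
the children of each vertex can be labelled bijectively by `C × ℕ`, the first coordinate of a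
label being the colour. Two children `w₁ ≠ w₂` of `r` of the same colour give a colour-preserving involution `σ`
of the labels, swapping their labels. Sending each vertex with label `ℓ` below `a` to the child of
`φ a` with label `σ ℓ` defines, recursively in the distance to `r`, an involutive colour-preserving
automorphism `φ` with `φ w₁ = w₂`.

For a random colouring it thus suffices that almost surely every vertex has infinitely many
neighbours of each colour. Avoiding a colour on `m` given vertices has probability at most
`((|C| - 1) / |C|) ^ m`, so avoiding it on an infinite set is a null event.
-/

open MeasureTheory Set
open scoped ENNReal

theorem exists_bijOn_prod_nat {α C : Type*} [Countable α] {S : Set α} (f : α → C)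
    (hS : ∀ k, {x ∈ S | f x = k}.Infinite) :
    ∃ g : α → C × ℕ, BijOn g S univ ∧ ∀ x, (g x).1 = f x := by
  have fiber_equiv (k : C) : {x : S // f x = k} ≃ ℕ :=
    have : Infinite {x // x ∈ S ∧ f x = k} := (hS k).to_subtype
    have : Infinite {x : S // f x = k} :=
      Infinite.of_injective _
        (Equiv.subtypeSubtypeEquivSubtypeInter (· ∈ S) (f · = k)).symm.injective
    nonempty_equiv_of_countable.some
  let E : S ≃ C × ℕ := (Equiv.sigmaFiberEquiv fun x : S => f x).symm.trans
    ((Equiv.sigmaCongrRight fiber_equiv).trans (Equiv.sigmaEquivProd C ℕ))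
  classical
  refine ⟨fun x => if hx : x ∈ S then E ⟨x, hx⟩ else (f x, 0), ⟨fun _ _ => mem_univ _, ?_, ?_⟩, ?_⟩
  · intro x hx y hy hxy
    simpa [hx, hy] using hxy
  · intro p _
    exact ⟨E.symm p, (E.symm p).2, by simp⟩
  · intro x
    by_cases hx : x ∈ S
    · simp [hx, E]
    · simp [hx]

namespace SimpleGraph

variable {V : Type*} {G : SimpleGraph V}

theorem Connected.countable_of_countable_neighborSet (hG : G.Connected)
    (h : ∀ v, (G.neighborSet v).Countable) : Countable V := by
  obtain ⟨r⟩ := hG.nonempty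
  have hlen : ∀ n, {u | ∃ p : G.Walk u r, p.length = n}.Countable := by
    intro n
    induction n with
    | zero =>
      refine (countable_singleton r).mono ?_
      rintro u ⟨p, hp⟩
      exact Walk.eq_of_length_eq_zero hp
    | succ n ih =>
      refine (ih.biUnion fun x _ => h x).mono ?_
      rintro u ⟨_ | ⟨hadj, q⟩, hp⟩
      · simp at hp
      · refine mem_biUnion ?_ hadj.symm
        exact ⟨q, by simpa using hp⟩
  rw [← countable_univ_iff]
  refine (countable_iUnion hlen).mono fun u _ => ?_
  obtain ⟨p⟩ := hG.preconnected u r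
  exact mem_iUnion.2 ⟨p.length, p, rfl⟩

theorem Connected.exists_adj_dist_add_one_eq (hG : G.Connected) {r u : V} (hu : u ≠ r) :
    ∃ x, G.Adj u x ∧ G.dist r x + 1 = G.dist r u := by
  obtain ⟨p, hp⟩ := hG.exists_walk_length_eq_dist u r
  cases p with
  | nil => exact absurd rfl hu
  | cons hadj q =>
    refine ⟨_, hadj, ?_⟩
    have hq := dist_le q
    have hpos := hG.pos_dist_of_ne hu
    rw [Walk.length_cons, dist_comm] at hp
    rw [dist_comm] at hq hpos
    rcases hadj.diff_dist_adj (u := r) with h | h | h <;> omega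

-- `parent r r = r`, so `children` has to exclude the root by hand.
open Classical in
noncomputable def parent (G : SimpleGraph V) (r u : V) : V :=
  if h : ∃ x, G.Adj u x ∧ G.dist r x + 1 = G.dist r u then h.choose else u

def children (G : SimpleGraph V) (r a : V) : Set V :=
  {x | x ≠ r ∧ G.parent r x = a}

theorem Connected.adj_parent (hG : G.Connected) {r u : V} (hu : u ≠ r) :
    G.Adj u (G.parent r u) := by
  rw [parent, dif_pos (hG.exists_adj_dist_add_one_eq hu)]
  exact (hG.exists_adj_dist_add_one_eq hu).choose_spec.1

theorem Connected.dist_parent_add_one (hG : G.Connected) {r u : V} (hu : u ≠ r) :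
    G.dist r (G.parent r u) + 1 = G.dist r u := by
  rw [parent, dif_pos (hG.exists_adj_dist_add_one_eq hu)]
  exact (hG.exists_adj_dist_add_one_eq hu).choose_spec.2

theorem mem_children_parent {r u : V} (hu : u ≠ r) : u ∈ G.children r (G.parent r u) :=
  ⟨hu, rfl⟩

namespace IsTree

theorem eq_parent_of_adj (hG : G.IsTree) {r u x : V} (hadj : G.Adj u x)
    (hx : G.dist r x + 1 = G.dist r u) : x = G.parent r u := by
  classical
  have hu : u ≠ r := by rintro rfl; simp at hx
  obtain ⟨p, hp, -⟩ := hG.connected.exists_path_of_dist r u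
  have eq_penultimate : ∀ y, G.Adj u y → G.dist r y + 1 = G.dist r u → y = p.penultimate := by
    intro y hy hyd
    obtain ⟨q, hq, hql⟩ := hG.connected.exists_path_of_dist r y
    have hu' : u ∉ q.support := fun h => by
      have := dist_le (q.takeUntil u h)
      have := q.length_takeUntil_le_length h
      omega
    exact hG.isAcyclic.eq_penultimate_of_adj_end hp hy
      (hG.isAcyclic.mem_support_of_ne_mem_support_of_adj_of_isPath hp hq hy hu')
  rw [eq_penultimate x hadj hx,
    eq_penultimate _ (hG.connected.adj_parent hu) (hG.connected.dist_parent_add_one hu)]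

theorem adj_iff_mem_children (hG : G.IsTree) (r : V) {u x : V} :
    G.Adj u x ↔ x ∈ G.children r u ∨ u ∈ G.children r x := by
  constructor
  · intro hadj
    have ne_root : ∀ {y z : V}, G.dist r y = G.dist r z + 1 → y ≠ r := by
      rintro y z h rfl
      simp at h
    rcases hG.dist_eq_dist_add_one_of_adj r hadj with h | h
    · exact .inr ⟨ne_root h, (hG.eq_parent_of_adj hadj h.symm).symm⟩
    · exact .inl ⟨ne_root h, (hG.eq_parent_of_adj hadj.symm h.symm).symm⟩
  · rintro (⟨hx, rfl⟩ | ⟨hu, rfl⟩)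
    · exact (hG.connected.adj_parent hx).symm
    · exact hG.connected.adj_parent hu

theorem mem_children_of_adj (hG : G.IsTree) {r a x : V} (hadj : G.Adj a x)
    (hx : x ≠ G.parent r a) : x ∈ G.children r a :=
  ((hG.adj_iff_mem_children r).1 hadj).resolve_right fun h => hx h.2.symm

theorem mem_children_self_of_adj (hG : G.IsTree) {r x : V} (hadj : G.Adj r x) :
    x ∈ G.children r r :=
  ((hG.adj_iff_mem_children r).1 hadj).resolve_right fun h => h.1 rfl

variable {α : Type*}

open Classical in
noncomputable def relabel (hG : G.IsTree) (r : V) (L : V → α) (σ : α → α) (u : V) : V :=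
  if u = r then r
  else haveI : Nonempty V := ⟨r⟩
    Function.invFunOn L (G.children r (hG.relabel r L σ (G.parent r u))) (σ (L u))
termination_by G.dist r u
decreasing_by have := hG.connected.dist_parent_add_one ‹¬u = r›; omega

theorem relabel_root (hG : G.IsTree) (r : V) (L : V → α) (σ : α → α) :
    hG.relabel r L σ r = r := by
  rw [relabel, if_pos rfl]

theorem relabel_mem_children_and_label (hG : G.IsTree) {r : V} {L : V → α} (σ : α → α)
    (hL : ∀ a, BijOn L (G.children r a) univ) {a x : V} (hx : x ∈ G.children r a) :
    hG.relabel r L σ x ∈ G.children r (hG.relabel r L σ a) ∧ L (hG.relabel r L σ x) = σ (L x) := by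
  obtain ⟨hxr, rfl⟩ := hx
  have hsurj := (hL (hG.relabel r L σ (G.parent r x))).surjOn (mem_univ (σ (L x)))
  have : Nonempty V := ⟨r⟩
  have hx : hG.relabel r L σ x =
      Function.invFunOn L (G.children r (hG.relabel r L σ (G.parent r x))) (σ (L x)) := by
    rw [relabel, if_neg hxr]
  rw [hx]
  exact ⟨Function.invFunOn_mem hsurj, Function.invFunOn_eq hsurj⟩

theorem relabel_involutive (hG : G.IsTree) {r : V} {L : V → α} {σ : α → α}
    (hL : ∀ a, BijOn L (G.children r a) univ) (hσ : Function.Involutive σ) :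
    Function.Involutive (hG.relabel r L σ) := by
  intro u
  induction h : G.dist r u using Nat.strong_induction_on generalizing u with
  | _ n ih =>
    by_cases hu : u = r
    · rw [hu, relabel_root, relabel_root]
    have hpar := hG.connected.dist_parent_add_one hu
    have ih_parent := ih _ (by omega) (G.parent r u) rfl
    obtain ⟨hmem, hlabel⟩ := hG.relabel_mem_children_and_label σ hL (mem_children_parent hu)
    obtain ⟨hmem', hlabel'⟩ := hG.relabel_mem_children_and_label σ hL hmem
    rw [ih_parent] at hmem'
    refine (hL _).injOn hmem' (mem_children_parent hu) ?_
    rw [hlabel', hlabel, hσ]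

theorem relabel_adj (hG : G.IsTree) {r : V} {L : V → α} (σ : α → α)
    (hL : ∀ a, BijOn L (G.children r a) univ) {u x : V} (hadj : G.Adj u x) :
    G.Adj (hG.relabel r L σ u) (hG.relabel r L σ x) := by
  rw [hG.adj_iff_mem_children r] at hadj ⊢
  exact hadj.imp (fun h => (hG.relabel_mem_children_and_label σ hL h).1)
    (fun h => (hG.relabel_mem_children_and_label σ hL h).1)

noncomputable def relabelIso (hG : G.IsTree) {r : V} {L : V → α} {σ : α → α}
    (hL : ∀ a, BijOn L (G.children r a) univ) (hσ : Function.Involutive σ) : G ≃g G where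
  toEquiv := (hG.relabel_involutive hL hσ).toPerm
  map_rel_iff' {u x} := by
    refine ⟨fun h => ?_, hG.relabel_adj σ hL⟩
    simp only [Function.Involutive.coe_toPerm] at h ⊢
    simpa only [hG.relabel_involutive hL hσ _] using hG.relabel_adj σ hL h

@[simp]
theorem coe_relabelIso (hG : G.IsTree) {r : V} {L : V → α} {σ : α → α}
    (hL : ∀ a, BijOn L (G.children r a) univ) (hσ : Function.Involutive σ) :
    ⇑(hG.relabelIso hL hσ) = hG.relabel r L σ :=
  rfl

theorem exists_labelling_children [Countable V] (hG : G.IsTree) (r : V) {C : Type*} (c : V → C)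
    (hc : ∀ v k, {w ∈ G.neighborSet v | c w = k}.Infinite) :
    ∃ L : V → C × ℕ, (∀ a, BijOn L (G.children r a) univ) ∧ ∀ x, (L x).1 = c x := by
  have hchildren : ∀ a k, {x ∈ G.children r a | c x = k}.Infinite := fun a k =>
    ((hc a k).sdiff (finite_singleton (G.parent r a))).mono
      fun x hx => ⟨hG.mem_children_of_adj hx.1.1 hx.2, hx.1.2⟩
  choose g hg hgc using fun a => exists_bijOn_prod_nat c (hchildren a)
  refine ⟨fun x => g (G.parent r x) x, fun a => (hg a).congr fun x hx => ?_, fun x => hgc _ x⟩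
  rw [hx.2]

theorem exists_nontrivial_colour_preserving_iso [Countable V] (hG : G.IsTree) {C : Type*}
    (c : V → C)
    (hc : ∀ v k, {w ∈ G.neighborSet v | c w = k}.Infinite) :
    ∃ φ : G ≃g G, (∃ v, φ v ≠ v) ∧ ∀ v, c (φ v) = c v := by
  classical
  obtain ⟨r⟩ := hG.connected.nonempty
  obtain ⟨L, hL, hLc⟩ := hG.exists_labelling_children r c hc
  obtain ⟨w₁, ⟨hw₁, hc₁⟩, w₂, ⟨hw₂, hc₂⟩, hne⟩ := (hc r (c r)).nontrivial
  replace hw₁ := hG.mem_children_self_of_adj hw₁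
  replace hw₂ := hG.mem_children_self_of_adj hw₂
  let σ := Equiv.swap (L w₁) (L w₂)
  have hσc : ∀ p, (σ p).1 = p.1 := by
    intro p
    rw [Equiv.swap_apply_def]
    split_ifs with h₁ h₂
    · rw [h₁, hLc, hLc, hc₁, hc₂]
    · rw [h₂, hLc, hLc, hc₁, hc₂]
    · rfl
  have hσ : Function.Involutive σ := Equiv.swap_apply_self _ _
  refine ⟨hG.relabelIso hL hσ, ⟨w₁, ?_⟩, fun u => ?_⟩
  · obtain ⟨hmem, hlabel⟩ := hG.relabel_mem_children_and_label σ hL hw₁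
    rw [relabel_root] at hmem
    rw [coe_relabelIso, (hL r).injOn hmem hw₂ (by rw [hlabel, Equiv.swap_apply_left])]
    exact hne.symm
  · rw [coe_relabelIso]
    by_cases hu : u = r
    · rw [hu, relabel_root]
    · rw [← hLc, ← hLc, (hG.relabel_mem_children_and_label σ hL (mem_children_parent hu)).2, hσc]

end IsTree

end SimpleGraph

section RandomColouring

variable {V C : Type*} [Fintype C] [MeasurableSpace C] {μ : Measure (V → C)}

theorem measure_forall_mem_finset_ne_le
    (hμ : ∀ (F : Finset V) (f : V → C),
      μ {c : V → C | ∀ v ∈ F, c v = f v} = ((Fintype.card C : ℝ≥0∞))⁻¹ ^ F.card)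
    (F : Finset V) (k : C) :
    μ {c : V → C | ∀ w ∈ F, c w ≠ k} ≤
      (((Fintype.card C - 1 : ℕ) : ℝ≥0∞) / Fintype.card C) ^ F.card := by
  classical
  let extend (g : F → C) (w : V) : C := if hw : w ∈ F then g ⟨w, hw⟩ else k
  let avoiding := Fintype.piFinset fun _ : F => ({k}ᶜ : Finset C)
  have hcover : {c : V → C | ∀ w ∈ F, c w ≠ k} ⊆
      ⋃ g ∈ avoiding, {c : V → C | ∀ w ∈ F, c w = extend g w} := by
    intro c hc
    refine mem_biUnion (x := fun w : F => c w) ?_ fun w hw => by simp [extend, hw]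
    simpa [avoiding] using hc
  calc μ _ ≤ ∑ g ∈ avoiding, μ {c : V → C | ∀ w ∈ F, c w = extend g w} :=
        (measure_mono hcover).trans (measure_biUnion_finset_le _ _)
    _ = (((Fintype.card C - 1 : ℕ) : ℝ≥0∞) / Fintype.card C) ^ F.card := by
        simp [hμ, avoiding, Fintype.card_piFinset, Finset.card_compl, div_eq_mul_inv, mul_pow]

theorem measure_forall_mem_ne_eq_zero
    (hμ : ∀ (F : Finset V) (f : V → C),
      μ {c : V → C | ∀ v ∈ F, c v = f v} = ((Fintype.card C : ℝ≥0∞))⁻¹ ^ F.card)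
    {S : Set V} (hS : S.Infinite) (k : C) :
    μ {c : V → C | ∀ w ∈ S, c w ≠ k} = 0 := by
  have hlt : ((Fintype.card C - 1 : ℕ) : ℝ≥0∞) / Fintype.card C < 1 := by
    have hC := Fintype.card_pos_iff.2 ⟨k⟩
    rw [ENNReal.div_lt_iff (by simp; omega) (by simp), one_mul]
    exact_mod_cast Nat.sub_lt hC one_pos
  refine le_antisymm (ge_of_tendsto' (ENNReal.tendsto_pow_atTop_nhds_zero_of_lt_one hlt)
    fun m => ?_) zero_le
  obtain ⟨F, hFS, rfl⟩ := hS.exists_subset_card_eq m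
  have hsub : {c : V → C | ∀ w ∈ S, c w ≠ k} ⊆ {c | ∀ w ∈ F, c w ≠ k} :=
    fun c hc w hw => hc w (hFS hw)
  exact (measure_mono hsub).trans (measure_forall_mem_finset_ne_le hμ F k)

theorem measure_setOf_finite_eq_zero [Countable V]
    (hμ : ∀ (F : Finset V) (f : V → C),
      μ {c : V → C | ∀ v ∈ F, c v = f v} = ((Fintype.card C : ℝ≥0∞))⁻¹ ^ F.card)
    {S : Set V} (hS : S.Infinite) (k : C) :
    μ {c : V → C | {w ∈ S | c w = k}.Finite} = 0 := by
  refine measure_mono_null (t := ⋃ F : Finset V, {c | ∀ w ∈ S \ F, c w ≠ k}) ?_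
    (measure_iUnion_null fun F => measure_forall_mem_ne_eq_zero hμ (hS.sdiff F.finite_toSet) k)
  intro c hc
  exact mem_iUnion.2 ⟨hc.toFinset, fun w hw hck => hw.2 (hc.mem_toFinset.2 ⟨hw.1, hck⟩)⟩

end RandomColouring

theorem tree_infinite_degree_not_distinguished_general {V : Type*} (G : SimpleGraph V)
    (htree : G.IsTree)
    (hdeg : ∀ v : V, Set.Countable (G.neighborSet v) ∧ Set.Infinite (G.neighborSet v))
    (C : Type*) [Fintype C] [MeasurableSpace C]
    (μ : Measure (V → C))
    (hμ : ∀ (F : Finset V) (f : V → C),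
      μ {c : V → C | ∀ v ∈ F, c v = f v} = ((Fintype.card C : ENNReal))⁻¹ ^ F.card) :
    μ {c : V → C | ¬ ∃ φ : G ≃g G, (∃ v, φ v ≠ v) ∧ ∀ v, c (φ v) = c v} = 0 ∧
    ∀ c : V → C, (∀ (v : V) (k : C), Set.Infinite {w ∈ G.neighborSet v | c w = k}) →
      ∃ φ : G ≃g G, (∃ v, φ v ≠ v) ∧ ∀ v, c (φ v) = c v := by
  have : Countable V := htree.connected.countable_of_countable_neighborSet fun v => (hdeg v).1
  refine ⟨measure_mono_null ?_ (measure_iUnion_null fun v => measure_iUnion_null fun k =>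
    measure_setOf_finite_eq_zero hμ (hdeg v).2 k), htree.exists_nontrivial_colour_preserving_iso⟩
  intro c hc
  have hfin : ∃ v k, {w ∈ G.neighborSet v | c w = k}.Finite := by
    by_contra! h
    exact hc (htree.exists_nontrivial_colour_preserving_iso c h)
  exact mem_iUnion₂.2 hfin

/-- Let `G` be the regular tree `T_∞` in which every vertex has countably infinite
degree, and let `c` be a random colouring of its vertices with finitely many colours
(i.i.d. uniform, encoded by the cylinder condition on `μ`). Then almost surely there is a
non-trivial automorphism of `G` preserving `c`. In fact, any colouring in which every
vertex has infinitely many neighbours of each colour admits a non-trivial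
colour-preserving automorphism. -/
theorem tree_infinite_degree_not_distinguished {V : Type*} (G : SimpleGraph V)
    (htree : G.IsTree)
    (hdeg : ∀ v : V, Set.Countable (G.neighborSet v) ∧ Set.Infinite (G.neighborSet v))
    (C : Type*) [Fintype C] [Nonempty C] [MeasurableSpace C] [DiscreteMeasurableSpace C]
    (μ : Measure (V → C)) [IsProbabilityMeasure μ]
    (hμ : ∀ (F : Finset V) (f : V → C),
      μ {c : V → C | ∀ v ∈ F, c v = f v} = ((Fintype.card C : ENNReal))⁻¹ ^ F.card) :
    μ {c : V → C | ¬ ∃ φ : G ≃g G, (∃ v, φ v ≠ v) ∧ ∀ v, c (φ v) = c v} = 0 ∧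
    ∀ c : V → C, (∀ (v : V) (k : C), Set.Infinite {w ∈ G.neighborSet v | c w = k}) →
      ∃ φ : G ≃g G, (∃ v, φ v ≠ v) ∧ ∀ v, c (φ v) = c v :=
  tree_infinite_degree_not_distinguished_general G htree hdeg C μ hμ
end

section
/- Let G be a connected locally finite graph with at least two ends and infinite motion. If c is a random 2-colouring of G, then the stabiliser (Aut G)_c is almost surely compact in the permutation topology; equivalently, almost surely some vertex has finite orbit under (Aut G)_c. -/
/-!
Fix a vertex `v₀`. Two distinct ends are separated by the ball of some radius `r` around `v₀`, so a
vertex `x` with `d(v₀, x) > 2r` lies outside some infinite component `U` of the complement of that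
ball; every geodesic from `x` into `U` crosses the ball, whence `d(v₀, u) < d(x, u)` for `u ∈ U`.
If a colour-preserving automorphism maps `v₀` to `x`, the spheres of each radius around `v₀` and `x`
contain equally many vertices of colour `true`. For `m` vertices of `U` at distinct distances from
`v₀`, these equalities determine their colours, by induction on the distance, from the colours of
the other vertices of a large ball; so the event has probability at most `2⁻ᵐ`, hence zero.
Almost surely, then, the orbit of `v₀` lies in the ball of radius `2r`.
-/

open MeasureTheory

lemma Set.Infinite.exists_finset_subset_card_eq_injOn {α β : Type*} {U : Set α} (hU : U.Infinite)
    {f : α → β} (hf : ∀ b, (f ⁻¹' {b}).Finite) (m : ℕ) :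
    ∃ S : Finset α, ↑S ⊆ U ∧ S.card = m ∧ Set.InjOn f S := by
  obtain ⟨U', hU'U, hbij⟩ := Set.exists_subset_bijOn U f
  have himage : (f '' U).Infinite := fun h =>
    hU ((h.preimage' fun b _ => hf b).subset (Set.subset_preimage_image f U))
  have hU' : U'.Infinite := fun h => himage (hbij.image_eq ▸ h.image f)
  obtain ⟨S, hSU', hS⟩ := hU'.exists_subset_card_eq m
  exact ⟨S, hSU'.trans hU'U, hS, hbij.injOn.mono hSU'⟩

lemma apply_eq_of_ncard_sep_true_eq {V : Type*} {s : Set V} (hs : s.Finite) {c c' : V → Bool}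
    {u : V} (hu : u ∈ s) (hagree : Set.EqOn c c' (s \ {u}))
    (hcount : {w ∈ s | c w = true}.ncard = {w ∈ s | c' w = true}.ncard) : c u = c' u := by
  have ncard_succ : ∀ c c' : V → Bool, Set.EqOn c c' (s \ {u}) → c u = true → c' u = false →
      {w ∈ s | c w = true}.ncard = {w ∈ s | c' w = true}.ncard + 1 := by
    intro c c' hagree hc hc'
    have hinsert : {w ∈ s | c w = true} = insert u {w ∈ s | c' w = true} := by
      ext w
      obtain rfl | hw := eq_or_ne w u
      · simp [hu, hc]
      · rw [Set.mem_insert_iff, or_iff_right hw]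
        exact and_congr_right fun hws => by rw [hagree ⟨hws, hw⟩]
    rw [hinsert, Set.ncard_insert_of_notMem (by simp [hc']) (hs.subset fun w hw => hw.1)]
  cases hc : c u <;> cases hc' : c' u
  · rfl
  · have := ncard_succ c' c hagree.symm hc' hc; omega
  · have := ncard_succ c c' hagree hc hc'; omega
  · rfl

section RandomColouring

variable {V : Type*} {μ : Measure (V → Bool)}

lemma measure_le_inv_two_pow_of_eqOn_imp_eqOn
    (hμ : ∀ (F : Finset V) (f : V → Bool),
      μ {c : V → Bool | ∀ v ∈ F, c v = f v} = (2 : ENNReal)⁻¹ ^ F.card)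
    {R S : Finset V} (hRS : Disjoint R S) {E : Set (V → Bool)}
    (hE : ∀ c ∈ E, ∀ c' ∈ E, Set.EqOn c c' R → Set.EqOn c c' S) :
    μ E ≤ 2⁻¹ ^ S.card := by
  classical
  let rep : (R → Bool) → V → Bool := fun f =>
    if h : ∃ c ∈ E, ∀ v : R, c v = f v then h.choose else fun _ => false
  have hcover : E ⊆ ⋃ f : R → Bool, {c | ∀ v ∈ R ∪ S, c v = rep f v} := by
    intro c hc
    have h : ∃ c' ∈ E, ∀ v : R, c' v = c v := ⟨c, hc, fun _ => rfl⟩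
    obtain ⟨hmem, hagree⟩ := h.choose_spec
    have hR : Set.EqOn c h.choose R := fun v hv => (hagree ⟨v, hv⟩).symm
    refine Set.mem_iUnion.mpr ⟨fun v => c v, fun v hv => ?_⟩
    simp only [rep, dif_pos h]
    rcases Finset.mem_union.mp hv with hv | hv
    · exact hR hv
    · exact hE c hc _ hmem hR hv
  calc μ E ≤ ∑ f : R → Bool, μ {c | ∀ v ∈ R ∪ S, c v = rep f v} :=
        (measure_mono hcover).trans (measure_iUnion_fintype_le _ _)
    _ = 2 ^ R.card * 2⁻¹ ^ (R.card + S.card) := by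
        simp only [hμ, Finset.sum_const, Finset.card_univ, Fintype.card_fun, Fintype.card_coe,
          Fintype.card_bool, nsmul_eq_mul, Nat.cast_pow, Finset.card_union_of_disjoint hRS]
        norm_num
    _ = 2⁻¹ ^ S.card := by
        rw [pow_add, ← mul_assoc, ← mul_pow,
          ENNReal.mul_inv_cancel two_ne_zero ENNReal.ofNat_ne_top, one_pow, one_mul]

end RandomColouring

namespace SimpleGraph

variable {V : Type*} {G : SimpleGraph V}

lemma Connected.dist_map_iso (hconn : G.Connected) (φ : G ≃g G) (a b : V) :
    G.dist (φ a) (φ b) = G.dist a b := by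
  have dist_map_le (ψ : G ≃g G) (a b : V) : G.dist (ψ a) (ψ b) ≤ G.dist a b := by
    obtain ⟨p, hp⟩ := hconn.exists_walk_length_eq_dist a b
    simpa [hp] using dist_le (p.map ψ.toHom)
  refine (dist_map_le φ a b).antisymm ?_
  simpa using dist_map_le φ.symm (φ a) (φ b)

lemma Connected.finite_setOf_dist_le (hconn : G.Connected) (hlf : ∀ v, (G.neighborSet v).Finite)
    (v : V) (n : ℕ) : {u | G.dist v u ≤ n}.Finite := by
  induction n with
  | zero => simp [hconn.dist_eq_zero_iff]
  | succ n ih =>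
    refine (ih.union (ih.biUnion fun w _ => hlf w)).subset fun u hu => ?_
    obtain rfl | hne := eq_or_ne u v
    · simp
    obtain ⟨p, hp⟩ := hconn.exists_walk_length_eq_dist u v
    cases p with
    | nil => exact absurd rfl hne
    | @cons _ w _ hadj q =>
      refine Or.inr (Set.mem_biUnion (x := w) ?_ hadj.symm)
      have := dist_le q
      simp only [Walk.length_cons, Set.mem_ofPred_eq] at hp hu ⊢
      rw [dist_comm] at hp ⊢
      omega

lemma Connected.countable_of_finite_neighborSet (hconn : G.Connected)
    (hlf : ∀ v, (G.neighborSet v).Finite) : Countable V := by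
  obtain ⟨v⟩ := hconn.nonempty
  refine Set.countable_univ_iff.mp ((Set.countable_iUnion fun n : ℕ =>
    (hconn.finite_setOf_dist_le hlf v n).countable).mono fun u _ => ?_)
  exact Set.mem_iUnion.mpr ⟨G.dist v u, le_refl (G.dist v u)⟩

lemma ComponentCompl.exists_mem_support_mem_of_walk {K : Set V} (C : G.ComponentCompl K)
    {u x : V} (p : G.Walk u x) (hu : u ∈ C) (hx : x ∉ C) : ∃ k ∈ p.support, k ∈ K := by
  obtain ⟨d, hd, hdC, hdC'⟩ := p.exists_boundary_dart C.supp hu hx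
  refine ⟨d.snd, p.dart_snd_mem_support_of_mem_darts hd, ?_⟩
  by_contra hK
  exact hdC' (C.mem_of_adj _ _ hdC hK d.adj)

lemma end_componentCompl_supp_infinite (e : G.end) (K : (Finset V)ᵒᵖ) :
    (e.val K).supp.Infinite := by
  refine (e.val K).infinite_iff_in_all_ranges.mpr fun L h => ?_
  exact ⟨e.val (Opposite.op L), e.prop (CategoryTheory.opHomOfLE h)⟩

lemma end_val_ne_of_subset {e₁ e₂ : G.end} {K L : Finset V} (hK : e₁.val (.op K) ≠ e₂.val (.op K))
    (hKL : K ⊆ L) : e₁.val (.op L) ≠ e₂.val (.op L) := by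
  intro h
  rw [← e₁.prop (CategoryTheory.opHomOfLE hKL), ← e₂.prop (CategoryTheory.opHomOfLE hKL)] at hK
  exact hK (congrArg _ h)

lemma exists_infinite_componentCompl_notMem {e₁ e₂ : G.end} {L : Finset V}
    (hL : e₁.val (.op L) ≠ e₂.val (.op L)) (x : V) :
    ∃ C : G.ComponentCompl (L : Set V), C.supp.Infinite ∧ x ∉ C := by
  by_cases h₁ : x ∈ (e₁.val (.op L)).supp
  · refine ⟨e₂.val (.op L), end_componentCompl_supp_infinite e₂ _, fun h₂ => hL ?_⟩
    obtain ⟨_, h₁⟩ := ComponentCompl.mem_supp_iff.mp h₁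
    obtain ⟨_, h₂⟩ := ComponentCompl.mem_supp_iff.mp h₂
    exact h₁.symm.trans h₂
  · exact ⟨e₁.val (.op L), end_componentCompl_supp_infinite e₁ _, h₁⟩

lemma Connected.dist_lt_dist_of_mem_componentCompl (hconn : G.Connected) {K : Set V} {v₀ x u : V}
    {r : ℕ} (hK : ∀ k ∈ K, G.dist v₀ k ≤ r) (hx : 2 * r < G.dist v₀ x)
    (C : G.ComponentCompl K) (hxC : x ∉ C) (huC : u ∈ C) : G.dist v₀ u < G.dist x u := by
  classical
  obtain ⟨p, hp⟩ := hconn.exists_walk_length_eq_dist u x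
  obtain ⟨k, hkp, hkK⟩ := C.exists_mem_support_mem_of_walk p huC hxC
  have hsplit := congrArg Walk.length (p.take_spec hkp)
  rw [Walk.length_append] at hsplit
  have h₁ := dist_le (p.takeUntil k hkp)
  have h₂ := dist_le (p.dropUntil k hkp)
  have h₃ := hK k hkK
  have h₄ : G.dist v₀ u ≤ G.dist v₀ k + G.dist u k := by
    rw [dist_comm (u := u)]; exact hconn.dist_triangle
  have h₅ : G.dist v₀ x ≤ G.dist v₀ k + G.dist k x := hconn.dist_triangle
  rw [dist_comm (u := x)]
  omega

lemma Connected.exists_radius_infinite_closer (hconn : G.Connected)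
    (hlf : ∀ v, (G.neighborSet v).Finite) (hends : ∃ e₁ e₂ : G.end, e₁ ≠ e₂) (v₀ : V) :
    ∃ r : ℕ, ∀ x, 2 * r < G.dist v₀ x →
      ∃ U : Set V, U.Infinite ∧ ∀ u ∈ U, G.dist v₀ u < G.dist x u := by
  obtain ⟨e₁, e₂, hne⟩ := hends
  obtain ⟨⟨K⟩, hK⟩ : ∃ K, e₁.val K ≠ e₂.val K := by
    by_contra! h
    exact hne (Subtype.ext (funext h))
  let r := K.sup (G.dist v₀)
  let L := (hconn.finite_setOf_dist_le hlf v₀ r).toFinset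
  have hL : ∀ k ∈ (L : Set V), G.dist v₀ k ≤ r := by simp [L]
  have hKL : K ⊆ L := fun k hk => by simpa [L] using Finset.le_sup (f := G.dist v₀) hk
  refine ⟨r, fun x hx => ?_⟩
  obtain ⟨C, hCinf, hxC⟩ := exists_infinite_componentCompl_notMem (end_val_ne_of_subset hK hKL) x
  exact ⟨C.supp, hCinf, fun u hu => hconn.dist_lt_dist_of_mem_componentCompl hL hx C hxC hu⟩

lemma Connected.ncard_sphere_colour_eq_of_iso (hconn : G.Connected) {c : V → Bool} {φ : G ≃g G}
    (hφc : ∀ u, c (φ u) = c u) {v₀ x : V} (hφx : φ v₀ = x) (n : ℕ) :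
    {u | G.dist v₀ u = n ∧ c u = true}.ncard = {u | G.dist x u = n ∧ c u = true}.ncard := by
  rw [← Set.ncard_preimage_of_injective_subset_range (s := {u | G.dist x u = n ∧ c u = true})
    φ.injective (by simp [φ.surjective.range_eq])]
  congr 1
  ext u
  simp [← hφx, hconn.dist_map_iso, hφc]

lemma eqOn_of_ncard_sphere_colour_eq {v₀ x : V} (hsph : ∀ n, {u | G.dist v₀ u = n}.Finite)
    {S : Finset V} (hinj : Set.InjOn (G.dist v₀) S) (hSx : ∀ s ∈ S, G.dist v₀ s < G.dist x s)
    {B : Set V} (hB : ∀ s ∈ S, ∀ u, G.dist v₀ u = G.dist v₀ s ∨ G.dist x u = G.dist v₀ s → u ∈ B)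
    {c c' : V → Bool}
    (hc : ∀ n, {u | G.dist v₀ u = n ∧ c u = true}.ncard = {u | G.dist x u = n ∧ c u = true}.ncard)
    (hc' : ∀ n,
      {u | G.dist v₀ u = n ∧ c' u = true}.ncard = {u | G.dist x u = n ∧ c' u = true}.ncard)
    (hagree : Set.EqOn c c' (B \ S)) : Set.EqOn c c' S := by
  suffices h : ∀ n, ∀ s ∈ S, G.dist v₀ s = n → c s = c' s from fun s hs => h _ s hs rfl
  intro n
  induction n using Nat.strong_induction_on with
  | _ n ih =>
  rintro s hs rfl
  have hx : {u | G.dist x u = G.dist v₀ s ∧ c u = true} =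
      {u | G.dist x u = G.dist v₀ s ∧ c' u = true} := by
    ext u
    refine and_congr_right fun hu => ?_
    by_cases huS : u ∈ S
    · rw [ih _ (hu ▸ hSx u huS) u huS rfl]
    · rw [hagree ⟨hB s hs u (.inr hu), huS⟩]
  refine apply_eq_of_ncard_sep_true_eq (s := {u | G.dist v₀ u = G.dist v₀ s}) (hsph _) rfl
    (fun u hu => hagree ⟨hB s hs u (.inl hu.1), fun huS => hu.2 (hinj huS hs hu.1)⟩) ?_
  exact (hc _).trans ((congrArg Set.ncard hx).trans (hc' _).symm)

lemma measure_setOf_exists_iso_colour_eq_zero {μ : Measure (V → Bool)}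
    (hμ : ∀ (F : Finset V) (f : V → Bool),
      μ {c : V → Bool | ∀ v ∈ F, c v = f v} = (2 : ENNReal)⁻¹ ^ F.card)
    (hconn : G.Connected) (hlf : ∀ v, (G.neighborSet v).Finite) {v₀ x : V} {U : Set V}
    (hU : U.Infinite) (hUx : ∀ u ∈ U, G.dist v₀ u < G.dist x u) :
    μ {c | ∃ φ : G ≃g G, (∀ u, c (φ u) = c u) ∧ φ v₀ = x} = 0 := by
  classical
  have hsph : ∀ y n, {u | G.dist y u = n}.Finite := fun y n =>
    (hconn.finite_setOf_dist_le hlf y n).subset fun u hu => hu.le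
  have hpow :=
    ENNReal.tendsto_pow_atTop_nhds_zero_of_lt_one (ENNReal.inv_lt_one.2 ENNReal.one_lt_two)
  refine nonpos_iff_eq_zero.mp (ge_of_tendsto' hpow fun m => ?_)
  obtain ⟨S, hSU, rfl, hinj⟩ := hU.exists_finset_subset_card_eq_injOn (hsph v₀) m
  let N := S.sup (G.dist v₀)
  have hB : ({u | G.dist v₀ u ≤ N} ∪ {u | G.dist x u ≤ N}).Finite :=
    (hconn.finite_setOf_dist_le hlf v₀ N).union (hconn.finite_setOf_dist_le hlf x N)
  refine measure_le_inv_two_pow_of_eqOn_imp_eqOn hμ (R := hB.toFinset \ S) Finset.sdiff_disjoint ?_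
  rintro c ⟨φ, hφc, hφx⟩ c' ⟨φ', hφc', hφx'⟩ hR
  refine eqOn_of_ncard_sphere_colour_eq (hsph v₀) hinj (fun s hs => hUx s (hSU hs)) ?_
    (hconn.ncard_sphere_colour_eq_of_iso hφc hφx) (hconn.ncard_sphere_colour_eq_of_iso hφc' hφx')
    (fun u hu => hR (Finset.mem_sdiff.mpr ⟨hB.mem_toFinset.mpr hu.1, hu.2⟩))
  intro s hs u hu
  have := Finset.le_sup (f := G.dist v₀) hs
  rcases hu with hu | hu
  · exact .inl (show G.dist v₀ u ≤ N by omega)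
  · exact .inr (show G.dist x u ≤ N by omega)

end SimpleGraph

theorem two_ended_random_stabiliser_compact_general {V : Type*} (G : SimpleGraph V)
    (hconn : G.Connected) (hlf : ∀ v : V, Set.Finite (G.neighborSet v))
    (hends : ∃ e₁ e₂ : G.end, e₁ ≠ e₂)
    (μ : Measure (V → Bool))
    (hμ : ∀ (F : Finset V) (f : V → Bool),
      μ {c : V → Bool | ∀ v ∈ F, c v = f v} = (2 : ENNReal)⁻¹ ^ F.card) :
    μ {c : V → Bool |
        ¬ ∃ v : V, Set.Finite {w : V | ∃ φ : G ≃g G, (∀ u, c (φ u) = c u) ∧ φ v = w}} = 0 := by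
  obtain ⟨v₀⟩ := hconn.nonempty
  obtain ⟨r, hr⟩ := hconn.exists_radius_infinite_closer hlf hends v₀
  have : Countable V := hconn.countable_of_finite_neighborSet hlf
  refine measure_mono_null (t := ⋃ x, ⋃ (_ : 2 * r < G.dist v₀ x),
      {c | ∃ φ : G ≃g G, (∀ u, c (φ u) = c u) ∧ φ v₀ = x}) ?_
    (measure_iUnion_null fun x => measure_iUnion_null fun hx => ?_)
  · intro c hc
    have horbit : {w | ∃ φ : G ≃g G, (∀ u, c (φ u) = c u) ∧ φ v₀ = w}.Infinite :=
      fun h => hc ⟨v₀, h⟩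
    obtain ⟨x, hx, hxfar⟩ :=
      (horbit.sdiff (hconn.finite_setOf_dist_le hlf v₀ (2 * r))).nonempty
    exact Set.mem_iUnion₂.mpr ⟨x, not_le.mp hxfar, hx⟩
  · obtain ⟨U, hU, hUx⟩ := hr x hx
    exact SimpleGraph.measure_setOf_exists_iso_colour_eq_zero hμ hconn hlf hU hUx

/-- Let `G` be a connected, locally finite graph with at least two ends and infinite
motion. For a random `2`-colouring `c` of the vertices (i.i.d. uniform, encoded by the
cylinder condition on `μ`), the stabiliser of `c` in `Aut G` is almost surely compact;
equivalently (for closed subdegree finite permutation groups), almost surely some vertex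
has finite orbit under the group of colour-preserving automorphisms. -/
theorem two_ended_random_stabiliser_compact {V : Type*} (G : SimpleGraph V)
    (hconn : G.Connected) (hlf : ∀ v : V, Set.Finite (G.neighborSet v))
    (hends : ∃ e₁ e₂ : G.end, e₁ ≠ e₂)
    (hmotion : ∀ φ : G ≃g G, (∃ v, φ v ≠ v) → Set.Infinite {v : V | φ v ≠ v})
    (μ : Measure (V → Bool)) [IsProbabilityMeasure μ]
    (hμ : ∀ (F : Finset V) (f : V → Bool),
      μ {c : V → Bool | ∀ v ∈ F, c v = f v} = (2 : ENNReal)⁻¹ ^ F.card) :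
    μ {c : V → Bool |
        ¬ ∃ v : V, Set.Finite {w : V | ∃ φ : G ≃g G, (∀ u, c (φ u) = c u) ∧ φ v = w}} = 0 :=
  two_ended_random_stabiliser_compact_general G hconn hlf hends μ hμ
end
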